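/- arXiv:2403.12750 — 8 statements merged into one kernel-verified Lean document; each statement's English description precedes it below -/
import Mathlib

section
/- Let 𝕋 be a finite category, 𝕊 a replete full subcategory of 𝕋, and 𝒜 a quasi-abelian category. Then the pair (𝒯, 𝔽) is a torsion theory in the functor category 𝒜^𝕋; that is: (i) every natural transformation from an object of 𝒯 to an object of 𝔽 is the zero transformation; and (ii) for every functor F : 𝕋 → 𝒜 there exists a short exact sequence 0 → T → F → G → 0 in 𝒜^𝕋 (i.e. T → F is a kernel of F → G and F → G is a cokernel of T → F) with T an object of 𝒯 and G an object of 𝔽. -/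
open CategoryTheory Limits ZeroObject

universe w v u

namespace Paper

variable {𝕋 : Type v} [SmallCategory 𝕋] [FinCategory 𝕋]
variable {𝒜 : Type u} [Category.{w} 𝒜]

/-- Membership in the full subcategory `𝔽` of `𝒜^𝕋`: functors vanishing outside `𝕊`. -/
def memF (S : Set 𝕋) (F : 𝕋 ⥤ 𝒜) : Prop :=
  ∀ T : 𝕋, T ∉ S → IsZero (F.obj T)

/-- The index set `[T]` of morphisms `t : T' ⟶ T` with `T' ∉ 𝕊`. -/
def Idx (S : Set 𝕋) (T : 𝕋) : Type v :=
  { p : Σ T' : 𝕋, T' ⟶ T // p.1 ∉ S }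

instance (S : Set 𝕋) (T : 𝕋) : Finite (Idx S T) := by
  unfold Idx; infer_instance

/-- The canonical morphism `[F(t)]_{t ∈ [T]} : ⊕_{t ∈ [T]} F(dom t) ⟶ F(T)` induced
by the morphisms `F(t)` out of the finite coproduct. -/
noncomputable def canon (S : Set 𝕋) (F : 𝕋 ⥤ 𝒜) (T : 𝕋)
    [HasCoproduct (fun p : Idx S T => F.obj p.1.1)] :
    (∐ fun p : Idx S T => F.obj p.1.1) ⟶ F.obj T :=
  Sigma.desc fun p => F.map p.1.2

/-- Membership in the full subcategory `𝒯` of `𝒜^𝕋`: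
functors for which all the canonical morphisms `[F(t)]_{t ∈ [T]}` are epimorphisms. -/
def memT (S : Set 𝕋) (F : 𝕋 ⥤ 𝒜)
    [∀ T : 𝕋, HasCoproduct (fun p : Idx S T => F.obj p.1.1)] : Prop :=
  ∀ T : 𝕋, Epi (canon S F T)

/-- A quasi-abelian category: an additive category with kernels and cokernels in which
normal epimorphisms are stable under pullback and normal monomorphisms are stable
under pushout. -/
class QuasiAbelian (𝒜 : Type u) [Category.{w} 𝒜] [Preadditive 𝒜]
    [HasFiniteBiproducts 𝒜] [HasKernels 𝒜] [HasCokernels 𝒜] : Prop where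
  normalEpi_pullback_stable : ∀ {P X Y Z : 𝒜} (fst : P ⟶ X) (snd : P ⟶ Y)
    (g : X ⟶ Z) (f : Y ⟶ Z), IsPullback fst snd g f →
    Nonempty (NormalEpi f) → Nonempty (NormalEpi fst)
  normalMono_pushout_stable : ∀ {X Y Z P : 𝒜} (f : X ⟶ Y) (g : X ⟶ Z)
    (inl : Y ⟶ P) (inr : Z ⟶ P), IsPushout f g inl inr →
    Nonempty (NormalMono f) → Nonempty (NormalMono inr)

section Aux

variable [Preadditive 𝒜] [HasFiniteBiproducts 𝒜] [HasKernels 𝒜] [HasCokernels 𝒜]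

set_option linter.unusedSectionVars false

/-- In a quasi-abelian category, the canonical morphism from the source of any morphism `f`
to its image `ker (coker f)` is an epimorphism. -/
lemma epi_liftKernelCokernel [QuasiAbelian 𝒜] {A B : 𝒜} (f : A ⟶ B) :
    Epi (kernel.lift (cokernel.π f) f (cokernel.condition f)) := by
  haveI : HasCoequalizers 𝒜 := Preadditive.hasCoequalizers_of_hasCokernels
  haveI : HasPushouts 𝒜 := hasPushouts_of_hasBinaryCoproducts_of_hasCoequalizers 𝒜
  rw [Preadditive.epi_iff_cancel_zero]
  intro W u hu
  set ι := kernel.ι (cokernel.π f) with hι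
  have hP := IsPushout.of_hasPushout ι u
  obtain ⟨hm⟩ := QuasiAbelian.normalMono_pushout_stable ι u (pushout.inl ι u)
    (pushout.inr ι u) hP
    ⟨⟨cokernel f, cokernel.π f, kernel.condition _, kernelIsKernel _⟩⟩
  haveI : Mono (pushout.inr ι u) := mono_of_isLimit_fork hm.isLimit
  have h1 : f ≫ pushout.inl ι u = 0 := by
    have h1' : kernel.lift (cokernel.π f) f (cokernel.condition f) ≫
        ι ≫ pushout.inl ι u = 0 := by
      rw [pushout.condition, ← Category.assoc, hu, zero_comp]
    rw [← Category.assoc, kernel.lift_ι] at h1'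
    exact h1'
  have h2 : u ≫ pushout.inr ι u = 0 := by
    rw [← pushout.condition, ← cokernel.π_desc f (pushout.inl ι u) h1,
      ← Category.assoc, kernel.condition, zero_comp]
  exact zero_of_comp_mono _ h2

/-- `canon` at `X` composed with `F.map f` factors through `canon` at `Y`. -/
lemma canon_comp (S : Set 𝕋) (F : 𝕋 ⥤ 𝒜) {X Y : 𝕋} (f : X ⟶ Y) :
    canon S F X ≫ F.map f =
      (Sigma.desc fun p : Idx S X =>
        Sigma.ι (fun q : Idx S Y => F.obj q.1.1) ⟨⟨p.1.1, p.1.2 ≫ f⟩, p.2⟩) ≫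
        canon S F Y := by
  apply Sigma.hom_ext
  intro p
  rw [← Category.assoc, ← Category.assoc]
  rw [show Sigma.ι (fun q : Idx S X => F.obj q.1.1) p ≫ canon S F X = F.map p.1.2
    from Sigma.ι_desc _ _]
  rw [show Sigma.ι (fun q : Idx S X => F.obj q.1.1) p ≫
      (Sigma.desc fun p : Idx S X =>
        Sigma.ι (fun q : Idx S Y => F.obj q.1.1) ⟨⟨p.1.1, p.1.2 ≫ f⟩, p.2⟩) =
      Sigma.ι (fun q : Idx S Y => F.obj q.1.1) ⟨⟨p.1.1, p.1.2 ≫ f⟩, p.2⟩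
    from Sigma.ι_desc _ _]
  rw [show Sigma.ι (fun q : Idx S Y => F.obj q.1.1) ⟨⟨p.1.1, p.1.2 ≫ f⟩, p.2⟩ ≫ canon S F Y =
      F.map (p.1.2 ≫ f) from Sigma.ι_desc _ _]
  rw [F.map_comp]

lemma canon_comp_π (S : Set 𝕋) (F : 𝕋 ⥤ 𝒜) {X Y : 𝕋} (f : X ⟶ Y) :
    canon S F X ≫ F.map f ≫ cokernel.π (canon S F Y) = 0 := by
  rw [← Category.assoc, canon_comp S F f, Category.assoc, cokernel.condition, comp_zero]

/-- If `X ∉ S` then `canon S F X` is a (split) epimorphism. -/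
lemma epi_canon_of_not_mem (S : Set 𝕋) (F : 𝕋 ⥤ 𝒜) {X : 𝕋} (hX : X ∉ S) :
    Epi (canon S F X) := by
  have h : Sigma.ι (fun p : Idx S X => F.obj p.1.1) ⟨⟨X, 𝟙 X⟩, hX⟩ ≫ canon S F X = 𝟙 _ := by
    rw [show Sigma.ι (fun p : Idx S X => F.obj p.1.1) ⟨⟨X, 𝟙 X⟩, hX⟩ ≫ canon S F X =
      F.map (𝟙 X) from Sigma.ι_desc _ _, F.map_id]
  exact (IsSplitEpi.mk' ⟨_, h⟩).epi

lemma pi_eq_zero_of_epi {A B : 𝒜} (f : A ⟶ B) [Epi f] :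
    cokernel.π f = 0 := by
  rw [← cancel_epi f, cokernel.condition, comp_zero]

/-- The torsion-free quotient functor `G`. -/
noncomputable def Gfun (S : Set 𝕋) (F : 𝕋 ⥤ 𝒜) : 𝕋 ⥤ 𝒜 where
  obj X := cokernel (canon S F X)
  map {X Y} f := cokernel.desc (canon S F X)
    (F.map f ≫ cokernel.π (canon S F Y)) (canon_comp_π S F f)
  map_id X := by
    rw [← cancel_epi (cokernel.π (canon S F X)), cokernel.π_desc, F.map_id,
      Category.id_comp, Category.comp_id]
  map_comp {X Y Z} f g := by
    rw [← cancel_epi (cokernel.π (canon S F X))]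
    simp only [cokernel.π_desc, cokernel.π_desc_assoc, Functor.map_comp, Category.assoc]

/-- The quotient natural transformation `η : F ⟶ G`. -/
noncomputable def ηt (S : Set 𝕋) (F : 𝕋 ⥤ 𝒜) : F ⟶ Gfun S F where
  app X := cokernel.π (canon S F X)
  naturality {X Y} f := (cokernel.π_desc _ _ _).symm

/-- The torsion subfunctor `T`. -/
noncomputable def Tfun (S : Set 𝕋) (F : 𝕋 ⥤ 𝒜) : 𝕋 ⥤ 𝒜 where
  obj X := kernel (cokernel.π (canon S F X))
  map {X Y} f := kernel.lift (cokernel.π (canon S F Y))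
    (kernel.ι (cokernel.π (canon S F X)) ≫ F.map f) (by
      rw [Category.assoc, ← cokernel.π_desc (canon S F X)
        (F.map f ≫ cokernel.π (canon S F Y)) (canon_comp_π S F f),
        ← Category.assoc, kernel.condition, zero_comp])
  map_id X := by
    rw [← cancel_mono (kernel.ι (cokernel.π (canon S F X))), kernel.lift_ι,
      F.map_id, Category.comp_id, Category.id_comp]
  map_comp {X Y Z} f g := by
    rw [← cancel_mono (kernel.ι (cokernel.π (canon S F Z)))]
    simp only [kernel.lift_ι, kernel.lift_ι_assoc, Functor.map_comp, Category.assoc]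

/-- The inclusion natural transformation `ε : T ⟶ F`. -/
noncomputable def εt (S : Set 𝕋) (F : 𝕋 ⥤ 𝒜) : Tfun S F ⟶ F where
  app X := kernel.ι (cokernel.π (canon S F X))
  naturality {X Y} f := kernel.lift_ι _ _ _

end Aux

set_option maxHeartbeats 1600000 in
/-- For a finite category `𝕋`, a replete full subcategory `𝕊 ⊆ 𝕋` and a
quasi-abelian category `𝒜`, the pair `(𝒯, 𝔽)` is a torsion theory in `𝒜^𝕋`:
every morphism from a torsion object to a torsion-free object is zero, and every
functor `F : 𝕋 ⥤ 𝒜` fits in a short exact sequence `0 ⟶ T ⟶ F ⟶ G ⟶ 0` with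
`T ∈ 𝒯` and `G ∈ 𝔽`. -/
theorem torsionTheory_in_functor_category
    [Preadditive 𝒜] [HasFiniteBiproducts 𝒜] [HasKernels 𝒜] [HasCokernels 𝒜]
    [QuasiAbelian 𝒜]
    (S : Set 𝕋) (hS : ∀ ⦃X Y : 𝕋⦄, (X ≅ Y) → X ∈ S → Y ∈ S) :
    (∀ (F G : 𝕋 ⥤ 𝒜), memT S F → memF S G → ∀ α : F ⟶ G, α = 0) ∧
    (∀ F : 𝕋 ⥤ 𝒜, ∃ (T G : 𝕋 ⥤ 𝒜) (ε : T ⟶ F) (η : F ⟶ G) (w : ε ≫ η = 0),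
      memT S T ∧ memF S G ∧
      Nonempty (IsLimit (KernelFork.ofι ε w)) ∧
      Nonempty (IsColimit (CokernelCofork.ofπ η w))) := by
  constructor
  · -- Part 1
    intro F G hTF hFG α
    ext X
    have hzero : canon S F X ≫ α.app X = 0 := by
      apply Sigma.hom_ext
      intro p
      rw [comp_zero, ← Category.assoc,
        show Sigma.ι (fun q : Idx S X => F.obj q.1.1) p ≫ canon S F X = F.map p.1.2
          from Sigma.ι_desc _ _,
        α.naturality p.1.2,
        show α.app p.1.1 = 0 from (hFG p.1.1 p.2).eq_of_tgt _ _, zero_comp]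
    haveI := hTF X
    rw [show (0 : F ⟶ G).app X = 0 from rfl, ← cancel_epi (canon S F X), comp_zero]
    exact hzero
  · -- Part 2
    intro F
    refine ⟨Tfun S F, Gfun S F, εt S F, ηt S F, ?_, ?_, ?_, ?_, ?_⟩
    · ext X
      exact kernel.condition (cokernel.π (canon S F X))
    · -- memT S (Tfun S F)
      intro X
      haveI hmono : ∀ Y : 𝕋, Mono ((εt S F).app Y) := fun Y =>
        show Mono (kernel.ι (cokernel.π (canon S F Y))) from inferInstance
      haveI hepi : ∀ p : Idx S X, Epi ((εt S F).app p.1.1) := by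
        intro p
        haveI := epi_canon_of_not_mem S F p.2
        have hπ : cokernel.π (canon S F p.1.1) = 0 := pi_eq_zero_of_epi _
        haveI : IsSplitEpi ((εt S F).app p.1.1) := IsSplitEpi.mk'
          ⟨kernel.lift _ (𝟙 (F.obj p.1.1)) (by rw [hπ, comp_zero]), kernel.lift_ι _ _ _⟩
        exact IsSplitEpi.epi _
      have l4 : kernel.lift (cokernel.π (canon S F X)) (canon S F X)
          (cokernel.condition (canon S F X)) ≫ (εt S F).app X = canon S F X :=
        kernel.lift_ι _ _ _
      have heq : canon S (Tfun S F) X =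
          (Limits.Sigma.map fun p : Idx S X => (εt S F).app p.1.1) ≫
            kernel.lift (cokernel.π (canon S F X)) (canon S F X)
              (cokernel.condition (canon S F X)) := by
        refine (cancel_mono ((εt S F).app X)).1 ?_
        apply Sigma.hom_ext
        intro p
        have l1 : Sigma.ι (fun q : Idx S X => (Tfun S F).obj q.1.1) p ≫
            canon S (Tfun S F) X = (Tfun S F).map p.1.2 := Sigma.ι_desc _ _
        have l2 : Sigma.ι (fun q : Idx S X => (Tfun S F).obj q.1.1) p ≫
            (Limits.Sigma.map fun q : Idx S X => (εt S F).app q.1.1) =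
            (εt S F).app p.1.1 ≫ Sigma.ι (fun q : Idx S X => F.obj q.1.1) p :=
          ι_colimMap _ _
        have l5 : Sigma.ι (fun q : Idx S X => F.obj q.1.1) p ≫ canon S F X =
            F.map p.1.2 := Sigma.ι_desc _ _
        calc Sigma.ι (fun q : Idx S X => (Tfun S F).obj q.1.1) p ≫
              canon S (Tfun S F) X ≫ (εt S F).app X
            = (Tfun S F).map p.1.2 ≫ (εt S F).app X := by
              rw [← Category.assoc, l1]
          _ = (εt S F).app p.1.1 ≫ F.map p.1.2 := (εt S F).naturality p.1.2
          _ = (εt S F).app p.1.1 ≫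
                Sigma.ι (fun q : Idx S X => F.obj q.1.1) p ≫ canon S F X := by rw [l5]
          _ = Sigma.ι (fun q : Idx S X => (Tfun S F).obj q.1.1) p ≫
              ((Limits.Sigma.map fun q : Idx S X => (εt S F).app q.1.1) ≫
                kernel.lift (cokernel.π (canon S F X)) (canon S F X)
                  (cokernel.condition (canon S F X))) ≫ (εt S F).app X := by
              erw [Category.assoc, l4, ← Category.assoc, ← Category.assoc, l2,
                Category.assoc]
      rw [heq]
      haveI := epi_liftKernelCokernel (canon S F X)
      exact @epi_comp _ _ _ _ _ _ inferInstance _ this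
    · -- memF S (Gfun S F)
      intro X hX
      haveI := epi_canon_of_not_mem S F hX
      have hπ : cokernel.π (canon S F X) = 0 := pi_eq_zero_of_epi _
      show IsZero (cokernel (canon S F X))
      rw [IsZero.iff_id_eq_zero, ← cancel_epi (cokernel.π (canon S F X)),
        Category.comp_id, comp_zero]
      exact hπ
    · -- ε is a kernel of η
      haveI : ∀ Y : 𝕋, Mono ((εt S F).app Y) := fun Y =>
        show Mono (kernel.ι (cokernel.π (canon S F Y))) from inferInstance
      haveI : Mono (εt S F) := NatTrans.mono_of_mono_app _
      refine ⟨KernelFork.IsLimit.ofι' (εt S F) _ ?_⟩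
      intro W' k hk
      have hk' : ∀ Y : 𝕋, k.app Y ≫ cokernel.π (canon S F Y) = 0 := by
        intro Y
        have := NatTrans.congr_app hk Y
        simp at this
        exact this
      refine ⟨{ app := fun Y => kernel.lift (cokernel.π (canon S F Y)) (k.app Y) (hk' Y)
                naturality := ?_ }, ?_⟩
      · intro X Y f
        refine (cancel_mono (kernel.ι (cokernel.π (canon S F Y)))).1 ?_
        have h1 : (Tfun S F).map f ≫ kernel.ι (cokernel.π (canon S F Y)) =
            kernel.ι (cokernel.π (canon S F X)) ≫ F.map f := kernel.lift_ι _ _ _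
        have e1 : kernel.lift (cokernel.π (canon S F Y)) (k.app Y) (hk' Y) ≫
            kernel.ι (cokernel.π (canon S F Y)) = k.app Y := kernel.lift_ι _ _ _
        have e2 : kernel.lift (cokernel.π (canon S F X)) (k.app X) (hk' X) ≫
            kernel.ι (cokernel.π (canon S F X)) = k.app X := kernel.lift_ι _ _ _
        exact (Category.assoc _ _ _).trans ((congrArg (fun g => W'.map f ≫ g) e1).trans
          ((k.naturality f).trans ((congrArg (fun g => g ≫ F.map f) e2.symm).trans
            ((Category.assoc _ _ _).trans ((congrArg (fun g => _ ≫ g) h1.symm).trans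
              (Category.assoc _ _ _).symm)))))
      · ext Y
        exact kernel.lift_ι _ _ _
    · -- η is a cokernel of ε
      haveI : ∀ Y : 𝕋, Epi ((ηt S F).app Y) := fun Y =>
        show Epi (cokernel.π (canon S F Y)) from inferInstance
      haveI : Epi (ηt S F) := NatTrans.epi_of_epi_app _
      refine ⟨CokernelCofork.IsColimit.ofπ' (ηt S F) _ ?_⟩
      intro W' k hk
      have hk' : ∀ Y : 𝕋, canon S F Y ≫ k.app Y = 0 := by
        intro Y
        have h0 : kernel.ι (cokernel.π (canon S F Y)) ≫ k.app Y = 0 := by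
          have := NatTrans.congr_app hk Y
          simp at this
          exact this
        rw [← kernel.lift_ι (cokernel.π (canon S F Y)) (canon S F Y)
          (cokernel.condition _), Category.assoc, h0, comp_zero]
      refine ⟨{ app := fun Y => cokernel.desc (canon S F Y) (k.app Y) (hk' Y)
                naturality := ?_ }, ?_⟩
      · intro X Y f
        refine (cancel_epi (cokernel.π (canon S F X))).1 ?_
        have h1 : cokernel.π (canon S F X) ≫ (Gfun S F).map f =
            F.map f ≫ cokernel.π (canon S F Y) := cokernel.π_desc _ _ _
        erw [← Category.assoc, h1, Category.assoc, cokernel.π_desc, ← Category.assoc,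
          cokernel.π_desc, k.naturality]
      · ext Y
        exact cokernel.π_desc _ _ _

end Paper
end

section
/- Let 𝕋 be a finite category, 𝕊 a replete full subcategory of 𝕋, and 𝒜 a pointed category with finite coproducts and cokernels. Then the full subcategory 𝔽 of 𝒜^𝕋 is a reflective subcategory: the inclusion 𝖴 : 𝔽 → 𝒜^𝕋 admits a left adjoint 𝖥 whose unit component η_F : F → 𝖥(F) has, for each object T of 𝕋, T-component equal to the cokernel projection cok([F(t)]_{t∈[T]}) : F(T) → Cok([F(t)]_{t∈[T]}); in particular each component of each unit is a normal epimorphism, so 𝔽 is a normal epi-reflective subcategory of 𝒜^𝕋. -/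
open CategoryTheory Limits ZeroObject

universe w v u

namespace Paper

variable {𝕋 : Type v} [SmallCategory 𝕋] [FinCategory 𝕋]
variable {𝒜 : Type u} [Category.{w} 𝒜]

section Aux
variable [HasZeroMorphisms 𝒜] [HasFiniteCoproducts 𝒜] [HasCokernels 𝒜]
variable (S : Set 𝕋)

/-- The coproduct functor `T ↦ ⊕_{t ∈ [T]} F(dom t)`. -/
noncomputable def Cop (F : 𝕋 ⥤ 𝒜) : 𝕋 ⥤ 𝒜 where
  obj T := ∐ fun p : Idx S T => F.obj p.1.1
  map {T T₁} f := Sigma.desc fun p =>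
    Sigma.ι (fun q : Idx S T₁ => F.obj q.1.1) ⟨⟨p.1.1, p.1.2 ≫ f⟩, p.2⟩
  map_id T := by
    ext p
    obtain ⟨⟨T', t⟩, hp⟩ := p
    dsimp only
    simp only [Limits.Sigma.ι_desc, Category.comp_id]
    erw [Limits.Sigma.ι_desc]
    rw [Category.comp_id]
  map_comp {T T₁ T₂} f g := by
    ext p
    obtain ⟨⟨T', t⟩, hp⟩ := p
    dsimp only
    erw [Limits.Sigma.ι_desc, Limits.Sigma.ι_desc_assoc, Limits.Sigma.ι_desc]
    rw [Category.assoc]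

/-- `canon` as a natural transformation. -/
noncomputable def canonNat (F : 𝕋 ⥤ 𝒜) : Cop S F ⟶ F where
  app T := canon S F T
  naturality {T T₁} f := by
    dsimp [Cop, canon]
    ext p
    simp

lemma ι_canon (F : 𝕋 ⥤ 𝒜) (T : 𝕋) (p : Idx S T) :
    Sigma.ι (fun q : Idx S T => F.obj q.1.1) p ≫ canon S F T = F.map p.1.2 := by
  simp [canon]

/-- Any map in `[T₁]` composed with the cokernel projection vanishes. -/
lemma map_comp_pi {F : 𝕋 ⥤ 𝒜} {T' T₁ : 𝕋} (t : T' ⟶ T₁) (h : T' ∉ S) :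
    F.map t ≫ cokernel.π (canon S F T₁) = 0 := by
  have h2 : F.map t = Sigma.ι (fun q : Idx S T₁ => F.obj q.1.1) ⟨⟨T', t⟩, h⟩ ≫
      canon S F T₁ := by simp [canon]
  rw [h2, Category.assoc, cokernel.condition, comp_zero]

/-- The reflection of `F`, defined pointwise as the cokernel of `canon`. -/
noncomputable def RF (F : 𝕋 ⥤ 𝒜) : 𝕋 ⥤ 𝒜 where
  obj T := cokernel (canon S F T)
  map {T T₁} f := cokernel.desc _ (F.map f ≫ cokernel.π (canon S F T₁)) (by
    ext p
    rw [← Category.assoc, ι_canon, ← Functor.map_comp_assoc,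
      map_comp_pi S (p.1.2 ≫ f) p.2, comp_zero])
  map_id T := by
    apply coequalizer.hom_ext
    simp
  map_comp {T T₁ T₂} f g := by
    apply coequalizer.hom_ext
    simp

/-- The unit of the reflection. -/
noncomputable def unitNat (F : 𝕋 ⥤ 𝒜) : F ⟶ RF S F where
  app T := cokernel.π (canon S F T)
  naturality {T T₁} f := by
    dsimp [RF]
    rw [cokernel.π_desc]

lemma RF_memF (F : 𝕋 ⥤ 𝒜) : memF S (RF S F) := by
  intro T hT
  have hepi : Epi (canon S F T) := by
    refine ⟨fun {Z} g h hgh => ?_⟩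
    have := Sigma.ι (fun q : Idx S T => F.obj q.1.1) ⟨⟨T, 𝟙 T⟩, hT⟩ ≫= hgh
    simpa [canon] using this
  haveI := hepi
  rw [show (RF S F).obj T = cokernel (canon S F T) from rfl, IsZero.iff_id_eq_zero]
  apply coequalizer.hom_ext
  rw [Category.comp_id, comp_zero]
  exact zero_of_epi_comp (canon S F T) (cokernel.condition _)

/-- Descending a map to the reflection. -/
noncomputable def descNat {F G : 𝕋 ⥤ 𝒜} (hG : memF S G) (β : F ⟶ G) : RF S F ⟶ G where
  app T := cokernel.desc _ (β.app T) (by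
    ext p
    have h0 : β.app p.1.1 = 0 := (hG p.1.1 p.2).eq_of_tgt (β.app p.1.1) 0
    rw [← Category.assoc, ι_canon, β.naturality, h0, zero_comp, comp_zero])
  naturality {T T₁} f := by
    dsimp [RF]
    rw [← cancel_epi (cokernel.π (canon S F T))]
    simp only [cokernel.π_desc, cokernel.π_desc_assoc, Category.assoc]
    exact β.naturality f

/-- The reflection endofunctor. -/
noncomputable def RFunc : (𝕋 ⥤ 𝒜) ⥤ (𝕋 ⥤ 𝒜) where
  obj F := RF S F
  map {F F'} α := descNat S (RF_memF S F') (α ≫ unitNat S F')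
  map_id F := by
    ext T
    apply coequalizer.hom_ext
    simp [descNat, unitNat, RF, ObjectProperty.FullSubcategory.id_hom, ObjectProperty.FullSubcategory.comp_hom, ObjectProperty.homMk_hom]
  map_comp {F F' F''} α α' := by
    ext T
    apply coequalizer.hom_ext
    simp [descNat, unitNat, RF, ObjectProperty.FullSubcategory.id_hom, ObjectProperty.FullSubcategory.comp_hom, ObjectProperty.homMk_hom]

/-- The reflection functor into the full subcategory `𝔽`. -/
noncomputable def Rfunctor : (𝕋 ⥤ 𝒜) ⥤ ObjectProperty.FullSubcategory (memF (𝒜 := 𝒜) S) :=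
  ObjectProperty.lift _ (RFunc S) (RF_memF S)

/-- The reflection adjunction. -/
noncomputable def adjFS : Rfunctor S ⊣ ObjectProperty.ι (memF (𝒜 := 𝒜) S) :=
  Adjunction.mkOfHomEquiv
    { homEquiv := fun F G =>
        { toFun := fun φ => unitNat S F ≫ φ.hom
          invFun := fun β => ⟨descNat S G.2 β⟩
          left_inv := fun φ => by
            refine ObjectProperty.hom_ext _ <| NatTrans.ext (funext fun T => ?_)
            apply coequalizer.hom_ext
            simp [descNat, unitNat, RF, ObjectProperty.FullSubcategory.id_hom, ObjectProperty.FullSubcategory.comp_hom, ObjectProperty.homMk_hom]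
            rfl
          right_inv := fun β => by
            ext T
            simp [descNat, unitNat, RF, ObjectProperty.FullSubcategory.id_hom, ObjectProperty.FullSubcategory.comp_hom, ObjectProperty.homMk_hom] }
      homEquiv_naturality_left_symm := fun {F F' G} f g => by
        refine ObjectProperty.hom_ext _ <| NatTrans.ext (funext fun T => ?_)
        apply coequalizer.hom_ext
        simp [descNat, unitNat, RF, Rfunctor, RFunc, Equiv.coe_fn_mk, ObjectProperty.FullSubcategory.id_hom, ObjectProperty.FullSubcategory.comp_hom, ObjectProperty.homMk_hom]
        erw [cokernel.π_desc, cokernel.π_desc_assoc, Category.assoc, cokernel.π_desc]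
        rfl
      homEquiv_naturality_right := fun {F G G'} φ h => by
        exact (Category.assoc (unitNat S F) φ.hom h.hom).symm }

lemma adjFS_unit_app (F : 𝕋 ⥤ 𝒜) : (adjFS S).unit.app F = unitNat S F := by
  ext T
  simp [adjFS, unitNat, ObjectProperty.FullSubcategory.id_hom, ObjectProperty.homMk_hom, Rfunctor, RFunc, RF]
  exact Category.comp_id _

lemma canonNat_comp_unitNat (F : 𝕋 ⥤ 𝒜) : canonNat S F ≫ unitNat S F = 0 := by
  ext T
  exact cokernel.condition _

end Aux

/-- Let `𝕋` be a finite category, `𝕊` a replete full subcategory and `𝒜` a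
pointed category with finite coproducts and cokernels. Then `𝔽` is reflective in `𝒜^𝕋`:
the inclusion admits a left adjoint whose unit component at `F`, evaluated at any `T`, is a
cokernel of `[F(t)]_{t∈[T]}`; in particular all unit components are normal epimorphisms,
so `𝔽` is normal epi-reflective. -/
theorem F_is_reflective
    [HasZeroObject 𝒜] [HasZeroMorphisms 𝒜] [HasFiniteCoproducts 𝒜] [HasCokernels 𝒜]
    (S : Set 𝕋) (hS : ∀ ⦃X Y : 𝕋⦄, (X ≅ Y) → X ∈ S → Y ∈ S) :
    ∃ (R : (𝕋 ⥤ 𝒜) ⥤ ObjectProperty.FullSubcategory (memF (𝒜 := 𝒜) S))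
      (adj : R ⊣ ObjectProperty.ι (memF S)),
      (∀ (F : 𝕋 ⥤ 𝒜) (T : 𝕋),
        ∃ w : canon S F T ≫ (adj.unit.app F).app T = 0,
          Nonempty (IsColimit (CokernelCofork.ofπ ((adj.unit.app F).app T) w))) ∧
      (∀ F : 𝕋 ⥤ 𝒜, Nonempty (NormalEpi (adj.unit.app F))) := by

  refine ⟨Rfunctor S, adjFS S, ?_, ?_⟩
  · intro F T
    rw [adjFS_unit_app]
    exact ⟨cokernel.condition _, ⟨cokernelIsCokernel _⟩⟩
  · intro F
    rw [adjFS_unit_app]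
    refine ⟨⟨Cop S F, canonNat S F, canonNat_comp_unitNat S F, ?_⟩⟩
    apply evaluationJointlyReflectsColimits
    intro T
    exact (isColimitMapCoconeCoforkEquiv' ((evaluation 𝕋 𝒜).obj T)
      (canonNat_comp_unitNat S F)).symm (cokernelIsCokernel (canon S F T))
end Paper
end

section
/- Let 𝕋 be a finite category, 𝕊 a replete full subcategory of 𝕋, and 𝒜 a quasi-abelian category. Then 𝔽 is closed under subobjects and regular quotients in 𝒜^𝕋: (i) if α : F → G is a monomorphism in 𝒜^𝕋 and G lies in 𝔽, then F lies in 𝔽; and (ii) if β : G → H is a regular epimorphism in 𝒜^𝕋 and G lies in 𝔽, then H lies in 𝔽. Hence 𝔽 is a Birkhoff subcategory of 𝒜^𝕋. -/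
open CategoryTheory Limits ZeroObject

universe w v u

namespace Paper

variable {𝕋 : Type v} [SmallCategory 𝕋] [FinCategory 𝕋]
variable {𝒜 : Type u} [Category.{w} 𝒜]

section Aux

variable [Preadditive 𝒜] [HasFiniteBiproducts 𝒜] [HasCokernels 𝒜]
variable (S : Set 𝕋)

lemma canon_comp_pi (F : 𝕋 ⥤ 𝒜) {T U : 𝕋} (u : T ⟶ U) :
    canon S F T ≫ F.map u ≫ cokernel.π (canon S F U) = 0 := by
  apply Sigma.hom_ext
  intro p
  simp only [canon, colimit.ι_desc_assoc, Cofan.mk_ι_app, comp_zero]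
  rw [← F.map_comp_assoc]
  have : F.map (p.1.2 ≫ u) = Sigma.ι (fun p : Idx S U => F.obj p.1.1) ⟨⟨p.1.1, p.1.2 ≫ u⟩, p.2⟩ ≫ canon S F U := by
    rw [canon, colimit.ι_desc]; rfl
  rw [this, Category.assoc]
  have h0 : canon S F U ≫ cokernel.π (Limits.Sigma.desc fun p : Idx S U => F.map p.1.2) = 0 :=
    cokernel.condition _
  rw [h0, comp_zero]
  exact comp_zero.symm

/-- The reflection of `F`. -/
noncomputable def Lobj (F : 𝕋 ⥤ 𝒜) : 𝕋 ⥤ 𝒜 where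
  obj T := cokernel (canon S F T)
  map {T U} u := cokernel.desc _ (F.map u ≫ cokernel.π _) (canon_comp_pi S F u)
  map_id T := by
    rw [← cancel_epi (cokernel.π (canon S F T))]
    simp
  map_comp {T U V} u v := by
    rw [← cancel_epi (cokernel.π (canon S F T))]
    simp

lemma memF_Lobj (F : 𝕋 ⥤ 𝒜) : memF S (Lobj S F) := by
  intro T hT
  have : IsSplitEpi (canon S F T) :=
    ⟨⟨⟨Sigma.ι (fun p : Idx S T => F.obj p.1.1) ⟨⟨T, 𝟙 T⟩, hT⟩, by
      rw [canon, colimit.ι_desc]; exact F.map_id T⟩⟩⟩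
  haveI : Epi (canon S F T) := this.epi
  exact (isZero_zero 𝒜).of_iso (cokernel.ofEpi (canon S F T))

/-- The unit. -/
noncomputable def Lunit (F : 𝕋 ⥤ 𝒜) : F ⟶ Lobj S F where
  app T := cokernel.π (canon S F T)
  naturality {T U} u := by
    simp [Lobj]

omit [HasCokernels 𝒜] in
lemma canon_comp_zero {F G : 𝕋 ⥤ 𝒜} (α : F ⟶ G) (hG : memF S G) (T : 𝕋) :
    canon S F T ≫ α.app T = 0 := by
  apply Sigma.hom_ext
  intro p
  simp only [canon, colimit.ι_desc_assoc, Cofan.mk_ι_app, comp_zero]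
  rw [α.naturality, (hG p.1.1 p.2).eq_of_tgt (α.app p.1.1) 0, zero_comp]

/-- Descending along the unit. -/
noncomputable def Ldesc {F G : 𝕋 ⥤ 𝒜} (α : F ⟶ G) (hG : memF S G) :
    Lobj S F ⟶ G where
  app T := cokernel.desc _ (α.app T) (canon_comp_zero S α hG T)
  naturality {T U} u := by
    refine (cancel_epi (cokernel.π (canon S F T) : F.obj T ⟶ (Lobj S F).obj T)).1 ?_
    simp [Lobj]

end Aux

/-- Let `𝕋` be a finite category, `𝕊` a replete full subcategory and `𝒜`
quasi-abelian. Then `𝔽` is closed under subobjects and regular quotients in `𝒜^𝕋`, and it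
is reflective; hence `𝔽` is a Birkhoff subcategory of `𝒜^𝕋`. -/
theorem F_is_birkhoff
    [Preadditive 𝒜] [HasFiniteBiproducts 𝒜] [HasKernels 𝒜] [HasCokernels 𝒜]
    [QuasiAbelian 𝒜]
    (S : Set 𝕋) (hS : ∀ ⦃X Y : 𝕋⦄, (X ≅ Y) → X ∈ S → Y ∈ S) :
    (∀ (F G : 𝕋 ⥤ 𝒜) (α : F ⟶ G), Mono α → memF S G → memF S F) ∧
    (∀ (G H : 𝕋 ⥤ 𝒜) (β : G ⟶ H), Nonempty (RegularEpi β) → memF S G → memF S H) ∧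
    (ObjectProperty.ι (memF (𝒜 := 𝒜) S)).IsRightAdjoint := by
  refine ⟨?_, ?_, ?_⟩
  · intro F G α hα hG T hT
    haveI := hα
    haveI : ∀ a b : 𝕋, HasCoproductsOfShape (a ⟶ b) 𝒜 := fun a b => inferInstance
    have : Mono (α.app T) := (NatTrans.mono_iff_mono_app' 𝒜 α).mp hα T
    exact (hG T hT).of_mono (α.app T)
  · intro G H β hβ hG T hT
    obtain ⟨h⟩ := hβ
    haveI := h
    haveI : ∀ a b : 𝕋, HasProductsOfShape (a ⟶ b) 𝒜 := fun a b => inferInstance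
    haveI : Epi β := RegularEpi.epi β h
    have : Epi (β.app T) := (NatTrans.epi_iff_epi_app' 𝒜 β).mp this T
    exact (hG T hT).of_epi (β.app T)
  · let e : ∀ (X : 𝕋 ⥤ 𝒜) (Y : ObjectProperty.FullSubcategory (memF (𝒜 := 𝒜) S)),
        ((⟨Lobj S X, memF_Lobj S X⟩ : ObjectProperty.FullSubcategory (memF (𝒜 := 𝒜) S)) ⟶ Y) ≃
          (X ⟶ (ObjectProperty.ι (memF (𝒜 := 𝒜) S)).obj Y) := fun X Y =>
      { toFun := fun β => Lunit S X ≫ (ObjectProperty.ι _).map β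
        invFun := fun α => ObjectProperty.homMk (Ldesc S α Y.2)
        left_inv := fun β => by
          apply ObjectProperty.hom_ext
          apply NatTrans.ext
          funext T
          refine (cancel_epi (cokernel.π (canon S X T) : X.obj T ⟶ (Lobj S X).obj T)).1 ?_
          simp [Ldesc, Lunit, ObjectProperty.ι]
          rfl
        right_inv := fun α => by
          apply NatTrans.ext
          funext T
          simp [Ldesc, Lunit, ObjectProperty.ι]
          exact cokernel.π_desc _ _ _ }
    have he : ∀ (X : 𝕋 ⥤ 𝒜) (Y Y' : ObjectProperty.FullSubcategory (memF (𝒜 := 𝒜) S))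
        (g : Y ⟶ Y') (h), e X Y' (h ≫ g) = e X Y h ≫
          (ObjectProperty.ι (memF (𝒜 := 𝒜) S)).map g := by
      intro X Y Y' g h
      simp only [e, Equiv.coe_fn_mk, Functor.map_comp, Category.assoc]
    exact ⟨⟨_, ⟨Adjunction.adjunctionOfEquivLeft e he⟩⟩⟩

end Paper
end

section
/- Let 𝕋 be a finite category, 𝕊 a replete full subcategory of 𝕋, and 𝒜 an abelian category. Let α : F → G be a regular epimorphism in 𝒜^𝕋 (equivalently, each component α_T is an epimorphism). Then the following are equivalent: (1) α is a trivial extension with respect to 𝔽, i.e. the naturality square formed by α, the unit components η_F : F → 𝖥(F) and η_G : G → 𝖥(G), and 𝖥(α) is a pullback square in 𝒜^𝕋; (2) for every object T of 𝕋 the pair of morphisms α_T and (η_F)_T is jointly monomorphic. Moreover, for an object T not in 𝕊, since (η_F)_T = 0 condition (2) at T amounts to α_T being an isomorphism; in particular, if α is a trivial extension then α_T is an isomorphism for every T not in 𝕊. -/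
open CategoryTheory Limits ZeroObject

universe w v u

namespace Paper

variable {𝕋 : Type v} [SmallCategory 𝕋] [FinCategory 𝕋]
variable {𝒜 : Type u} [Category.{w} 𝒜]

private lemma isZero_of_epi_of_isZero {C : Type*} [Category C] [Limits.HasZeroMorphisms C] {X Y : C} (hX : IsZero X)
    (e : X ⟶ Y) [Epi e] : IsZero Y := by
  rw [IsZero.iff_id_eq_zero, ← cancel_epi e, Category.comp_id, comp_zero, hX.eq_of_src e 0]

private lemma unit_cancel [Abelian 𝒜] {S : Set 𝕋}
    {R : (𝕋 ⥤ 𝒜) ⥤ ObjectProperty.FullSubcategory (memF (𝒜 := 𝒜) S)}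
    (adj : R ⊣ ObjectProperty.ι (memF S)) (H : 𝕋 ⥤ 𝒜)
    (Q : ObjectProperty.FullSubcategory (memF (𝒜 := 𝒜) S))
    (q₁ q₂ : (ObjectProperty.ι (memF S)).obj (R.obj H) ⟶ Q.obj)
    (h : adj.unit.app H ≫ q₁ = adj.unit.app H ≫ q₂) : q₁ = q₂ := by
  have e1 : adj.homEquiv H Q (show R.obj H ⟶ Q from ObjectProperty.homMk q₁)
      = adj.homEquiv H Q (show R.obj H ⟶ Q from ObjectProperty.homMk q₂) := by
    rw [Adjunction.homEquiv_unit, Adjunction.homEquiv_unit]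
    exact h
  exact congrArg InducedCategory.Hom.hom ((adj.homEquiv H Q).injective e1)

private lemma unit_factor [Abelian 𝒜] {S : Set 𝕋}
    {R : (𝕋 ⥤ 𝒜) ⥤ ObjectProperty.FullSubcategory (memF (𝒜 := 𝒜) S)}
    (adj : R ⊣ ObjectProperty.ι (memF S)) (H : 𝕋 ⥤ 𝒜)
    (Q : ObjectProperty.FullSubcategory (memF (𝒜 := 𝒜) S)) (φ : H ⟶ Q.obj) :
    ∃ ψ : (ObjectProperty.ι (memF S)).obj (R.obj H) ⟶ Q.obj,
      adj.unit.app H ≫ ψ = φ := by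
  refine ⟨((adj.homEquiv H Q).symm φ).hom, ?_⟩
  have h2 : adj.homEquiv H Q ((adj.homEquiv H Q).symm φ) = φ :=
    (adj.homEquiv H Q).apply_symm_apply φ
  rw [Adjunction.homEquiv_unit] at h2
  exact h2

private lemma unit_epi [Abelian 𝒜] {S : Set 𝕋}
    {R : (𝕋 ⥤ 𝒜) ⥤ ObjectProperty.FullSubcategory (memF (𝒜 := 𝒜) S)}
    (adj : R ⊣ ObjectProperty.ι (memF S)) (H : 𝕋 ⥤ 𝒜) :
    Epi (adj.unit.app H) := by
  apply Preadditive.epi_of_cokernel_zero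
  have hQ : memF S (cokernel (adj.unit.app H)) := fun T hT =>
    isZero_of_epi_of_isZero ((R.obj H).property T hT) ((cokernel.π (adj.unit.app H)).app T)
  exact unit_cancel adj H ⟨_, hQ⟩ (cokernel.π (adj.unit.app H)) 0
    (by rw [cokernel.condition, comp_zero])

private lemma epi_lift_of_exact {C : Type*} [Category C] [Abelian C]
    {F G RF RG : C} (α : F ⟶ G) (ηF : F ⟶ RF) (ηG : G ⟶ RG) (rα : RF ⟶ RG)
    (comm : α ≫ ηG = ηF ≫ rα) [Epi ηF]
    (hSC : (ShortComplex.mk (kernel.ι ηF ≫ α) ηG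
      (by rw [Category.assoc, comm, ← Category.assoc, kernel.condition, zero_comp])).Exact) :
    Epi (pullback.lift α ηF comm) := by
  have hcfst : pullback.lift α ηF comm ≫ pullback.fst ηG rα = α := pullback.lift_fst _ _ _
  have hcsnd : pullback.lift α ηF comm ≫ pullback.snd ηG rα = ηF := pullback.lift_snd _ _ _
  rw [epi_iff_surjective_up_to_refinements]
  intro X p
  obtain ⟨X₁, π₁, hπ₁, a, fac₁⟩ :=
    surjective_up_to_refinements_of_epi ηF (p ≫ pullback.snd ηG rα)
  have hd0 : (π₁ ≫ p - a ≫ pullback.lift α ηF comm) ≫ pullback.snd ηG rα = 0 := by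
    rw [Preadditive.sub_comp, Category.assoc, Category.assoc, hcsnd, fac₁, sub_self]
  have hd1 : ((π₁ ≫ p - a ≫ pullback.lift α ηF comm) ≫ pullback.fst ηG rα) ≫ ηG = 0 := by
    rw [Category.assoc, pullback.condition, ← Category.assoc, hd0, zero_comp]
  obtain ⟨X₂, π₂, hπ₂, w, fac₂⟩ := hSC.exact_up_to_refinements _ hd1
  have key : π₂ ≫ (π₁ ≫ p - a ≫ pullback.lift α ηF comm)
      = (w ≫ kernel.ι ηF) ≫ pullback.lift α ηF comm := by
    apply pullback.hom_ext
    · simp only [Category.assoc] at fac₂ ⊢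
      rw [hcfst, fac₂]
    · simp only [Category.assoc]
      rw [hcsnd, hd0, comp_zero, kernel.condition, comp_zero]
  refine ⟨X₂, π₂ ≫ π₁, epi_comp _ _, w ≫ kernel.ι ηF + π₂ ≫ a, ?_⟩
  rw [Preadditive.add_comp, ← key]
  simp only [Preadditive.comp_sub, Category.assoc]
  abel

/-- Let `𝕋` be a finite category, `𝕊` a replete full subcategory and `𝒜`
abelian. A regular epimorphism `α : F ⟶ G` in `𝒜^𝕋` (equivalently, each component is an
epimorphism) is a trivial extension with respect to `𝔽` (its naturality square with the
units of the reflection is a pullback) iff for every `T` the pair `(α_T, (η_F)_T)` is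
jointly monomorphic; for `T ∉ 𝕊` the latter condition amounts to `α_T` being an
isomorphism, so if `α` is a trivial extension then `α_T` is an isomorphism for all
`T ∉ 𝕊`. -/
theorem trivial_extension_characterization
    [Abelian 𝒜]
    (S : Set 𝕋) (hS : ∀ ⦃X Y : 𝕋⦄, (X ≅ Y) → X ∈ S → Y ∈ S)
    (R : (𝕋 ⥤ 𝒜) ⥤ ObjectProperty.FullSubcategory (memF (𝒜 := 𝒜) S))
    (adj : R ⊣ ObjectProperty.ι (memF S))
    (F G : 𝕋 ⥤ 𝒜) (α : F ⟶ G) (hα : ∀ T : 𝕋, Epi (α.app T)) :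
    (IsPullback α (adj.unit.app F) (adj.unit.app G)
        ((R ⋙ ObjectProperty.ι (memF S)).map α) ↔
      ∀ T : 𝕋, ∀ {Z : 𝒜} (u v : Z ⟶ F.obj T),
        u ≫ α.app T = v ≫ α.app T →
        u ≫ (adj.unit.app F).app T = v ≫ (adj.unit.app F).app T → u = v) ∧
    (∀ T : 𝕋, T ∉ S →
      ((∀ {Z : 𝒜} (u v : Z ⟶ F.obj T),
          u ≫ α.app T = v ≫ α.app T →
          u ≫ (adj.unit.app F).app T = v ≫ (adj.unit.app F).app T → u = v) ↔
        IsIso (α.app T))) ∧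
    (IsPullback α (adj.unit.app F) (adj.unit.app G)
        ((R ⋙ ObjectProperty.ι (memF S)).map α) →
      ∀ T : 𝕋, T ∉ S → IsIso (α.app T)) := by
  haveI : ∀ T, Epi (α.app T) := hα
  haveI hαe : Epi α := NatTrans.epi_of_epi_app α
  haveI hηF : Epi (adj.unit.app F) := unit_epi adj F
  have comm : α ≫ adj.unit.app G
      = adj.unit.app F ≫ (R ⋙ ObjectProperty.ι (memF S)).map α :=
    adj.unit.naturality α
  have wκ : (kernel.ι (adj.unit.app F) ≫ α) ≫ adj.unit.app G = 0 := by
    rw [Category.assoc, comm, ← Category.assoc, kernel.condition, zero_comp]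
  have hSC : (ShortComplex.mk (kernel.ι (adj.unit.app F) ≫ α) (adj.unit.app G) wκ).Exact := by
    rw [ShortComplex.exact_iff_kernel_ι_comp_cokernel_π_zero]
    have hw : kernel.ι (adj.unit.app F)
        ≫ (α ≫ cokernel.π (kernel.ι (adj.unit.app F) ≫ α)) = 0 := by
      rw [← Category.assoc, cokernel.condition]
    have hρ : adj.unit.app F ≫ Abelian.epiDesc (adj.unit.app F) _ hw
        = α ≫ cokernel.π (kernel.ι (adj.unit.app F) ≫ α) :=
      Abelian.comp_epiDesc _ _ hw
    haveI : Epi (α ≫ cokernel.π (kernel.ι (adj.unit.app F) ≫ α)) := epi_comp _ _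
    haveI hρe : Epi (Abelian.epiDesc (adj.unit.app F) _ hw) := epi_of_epi_fac hρ
    have hW : memF S (cokernel (kernel.ι (adj.unit.app F) ≫ α)) := fun T hT =>
      isZero_of_epi_of_isZero ((R.obj F).property T hT)
        ((Abelian.epiDesc (adj.unit.app F) _ hw).app T)
    obtain ⟨ψ, hψ⟩ := unit_factor adj G ⟨_, hW⟩ (cokernel.π (kernel.ι (adj.unit.app F) ≫ α))
    show kernel.ι (adj.unit.app G) ≫ cokernel.π (kernel.ι (adj.unit.app F) ≫ α) = 0
    rw [← hψ, ← Category.assoc, kernel.condition, zero_comp]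
  have main : IsPullback α (adj.unit.app F) (adj.unit.app G)
      ((R ⋙ ObjectProperty.ι (memF S)).map α) ↔
      ∀ T : 𝕋, ∀ {Z : 𝒜} (u v : Z ⟶ F.obj T),
        u ≫ α.app T = v ≫ α.app T →
        u ≫ (adj.unit.app F).app T = v ≫ (adj.unit.app F).app T → u = v := by
    constructor
    · intro hpb T Z u v h1 h2
      have hpbT := hpb.map ((evaluation 𝕋 𝒜).obj T)
      exact hpbT.hom_ext h1 h2
    · intro hjm
      have hcfst : pullback.lift α (adj.unit.app F) comm
          ≫ pullback.fst _ _ = α := pullback.lift_fst _ _ _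
      have hcsnd : pullback.lift α (adj.unit.app F) comm
          ≫ pullback.snd _ _ = adj.unit.app F := pullback.lift_snd _ _ _
      haveI : ∀ T, Mono ((pullback.lift α (adj.unit.app F) comm).app T) := by
        intro T
        refine ⟨fun {Z} u v huv => ?_⟩
        refine hjm T u v ?_ ?_
        · have h := NatTrans.congr_app hcfst T
          rw [← h]
          simp only [NatTrans.comp_app, ← Category.assoc, huv]
        · have h := NatTrans.congr_app hcsnd T
          rw [← h]
          simp only [NatTrans.comp_app, ← Category.assoc, huv]
      haveI : Mono (pullback.lift α (adj.unit.app F) comm) := NatTrans.mono_of_mono_app _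
      haveI : Epi (pullback.lift α (adj.unit.app F) comm) :=
        epi_lift_of_exact α (adj.unit.app F) (adj.unit.app G) _ comm hSC
      haveI : IsIso (pullback.lift α (adj.unit.app F) comm) := isIso_of_mono_of_epi _
      exact IsPullback.of_iso_pullback ⟨comm⟩
        (asIso (pullback.lift α (adj.unit.app F) comm)) hcfst hcsnd
  have part2 : ∀ T : 𝕋, T ∉ S →
      ((∀ {Z : 𝒜} (u v : Z ⟶ F.obj T),
          u ≫ α.app T = v ≫ α.app T →
          u ≫ (adj.unit.app F).app T = v ≫ (adj.unit.app F).app T → u = v) ↔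
        IsIso (α.app T)) := by
    intro T hT
    have hz : IsZero (((R ⋙ ObjectProperty.ι (memF S)).obj F).obj T) :=
      (R.obj F).property T hT
    constructor
    · intro hyp
      haveI : Mono (α.app T) := ⟨fun {Z} u v h => hyp u v h (hz.eq_of_tgt _ _)⟩
      haveI := hα T
      exact isIso_of_mono_of_epi _
    · intro hiso Z u v h1 _
      haveI := hiso
      exact (cancel_mono (α.app T)).1 h1
  exact ⟨main, part2, fun hpb T hT =>
    (part2 T hT).1 (fun u v h1 h2 => main.1 hpb T u v h1 h2)⟩


end Paper
end

section
/- Let 𝕋 be a finite category, 𝕊 a replete full subcategory of 𝕋, and 𝒜 a quasi-abelian category. Let α : F → G be a regular epimorphism in 𝒜^𝕋. Then the following are equivalent: (1) α is a normal extension with respect to 𝔽, i.e. the first projection p₁ : F ×_G F → F of the kernel pair of α is a trivial extension (the naturality square formed by p₁, the unit components η_{F×_G F} and η_F, and 𝖥(p₁) is a pullback); (2) α is a central extension with respect to 𝔽, i.e. there exists a regular epimorphism p : E → G in 𝒜^𝕋 such that the pullback projection p₁ : E ×_G F → E of α along p is a trivial extension; (3) Ker(α) lies in 𝔽; (4) α_T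 is an isomorphism for every object T of 𝕋 not in 𝕊. -/
open CategoryTheory Limits ZeroObject

universe w v u

namespace Paper

variable {𝕋 : Type v} [SmallCategory 𝕋] [FinCategory 𝕋]
variable {𝒜 : Type u} [Category.{w} 𝒜]

section

variable [Preadditive 𝒜] [HasFiniteBiproducts 𝒜] [HasKernels 𝒜] [HasCokernels 𝒜]

/-- A quasi-abelian category has all finite limits. -/
instance (priority := 900) : HasFiniteLimits 𝒜 := by
  haveI : HasEqualizers 𝒜 := Preadditive.hasEqualizers_of_hasKernels
  exact hasFiniteLimits_of_hasEqualizers_and_finite_products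

/-- A regular epimorphism `g : X ⟶ Y` in `𝒜^𝕋` is a trivial extension with respect to the
reflection onto `𝔽` if its naturality square with the unit components is a pullback. -/
def IsTrivialExt (S : Set 𝕋)
    (R : (𝕋 ⥤ 𝒜) ⥤ ObjectProperty.FullSubcategory (memF (𝒜 := 𝒜) S))
    (adj : R ⊣ ObjectProperty.ι (memF S))
    {X Y : 𝕋 ⥤ 𝒜} (g : X ⟶ Y) : Prop :=
  IsPullback g (adj.unit.app X) (adj.unit.app Y)
    ((R ⋙ ObjectProperty.ι (memF S)).map g)

set_option linter.unusedSectionVars false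
set_option linter.unusedVariables false

theorem unit_cancel_s9 (S : Set 𝕋) (R : (𝕋 ⥤ 𝒜) ⥤ ObjectProperty.FullSubcategory (memF (𝒜 := 𝒜) S))
    (adj : R ⊣ ObjectProperty.ι (memF S))
    {A : 𝕋 ⥤ 𝒜} {B : ObjectProperty.FullSubcategory (memF (𝒜 := 𝒜) S)}
    {x y : R.obj A ⟶ B}
    (h : adj.unit.app A ≫ (ObjectProperty.ι (memF S)).map x
       = adj.unit.app A ≫ (ObjectProperty.ι (memF S)).map y) : x = y :=
  (adj.homEquiv A B).injective (by rwa [adj.homEquiv_unit, adj.homEquiv_unit])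

theorem unit_isIso (S : Set 𝕋) (R : (𝕋 ⥤ 𝒜) ⥤ ObjectProperty.FullSubcategory (memF (𝒜 := 𝒜) S))
    (adj : R ⊣ ObjectProperty.ι (memF S))
    {K : 𝕋 ⥤ 𝒜} (hK : memF S K) : IsIso (adj.unit.app K) := by
  let K' : ObjectProperty.FullSubcategory (memF (𝒜 := 𝒜) S) := ⟨K, hK⟩
  have tri : adj.unit.app K ≫ (ObjectProperty.ι (memF S)).map (adj.counit.app K')
      = 𝟙 K := adj.right_triangle_components K'
  refine ⟨(ObjectProperty.ι (memF S)).map (adj.counit.app K'), tri, ?_⟩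
  refine congrArg (fun f => (ObjectProperty.ι (memF S)).map f) (unit_cancel_s9 S R adj
    (x := (ObjectProperty.homMk ((ObjectProperty.ι (memF S)).map (adj.counit.app K') ≫ adj.unit.app K) :
      R.obj K ⟶ R.obj ((ObjectProperty.ι (memF S)).obj K')))
    (y := 𝟙 _) ?_)
  show adj.unit.app K ≫ ((ObjectProperty.ι (memF S)).map (adj.counit.app K') ≫
      adj.unit.app K) = adj.unit.app K ≫ (ObjectProperty.ι (memF S)).map (𝟙 (R.obj K))
  rw [← Category.assoc, tri]
  exact (Category.id_comp _).trans (Category.comp_id _).symm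

theorem URmap_add (S : Set 𝕋) (R : (𝕋 ⥤ 𝒜) ⥤ ObjectProperty.FullSubcategory (memF (𝒜 := 𝒜) S))
    (adj : R ⊣ ObjectProperty.ι (memF S))
    {A B : 𝕋 ⥤ 𝒜} (a b : A ⟶ B) :
    (R ⋙ ObjectProperty.ι (memF S)).map (a + b)
      = (R ⋙ ObjectProperty.ι (memF S)).map a
        + (R ⋙ ObjectProperty.ι (memF S)).map b := by
  refine congrArg (fun f => (ObjectProperty.ι (memF S)).map f) (unit_cancel_s9 S R adj (x := R.map (a + b))
    (y := (ObjectProperty.homMk ((R ⋙ ObjectProperty.ι (memF S)).map a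
        + (R ⋙ ObjectProperty.ι (memF S)).map b) : R.obj A ⟶ R.obj B)) ?_)
  show adj.unit.app A ≫ (R ⋙ ObjectProperty.ι (memF S)).map (a + b)
      = adj.unit.app A ≫ ((R ⋙ ObjectProperty.ι (memF S)).map a
        + (R ⋙ ObjectProperty.ι (memF S)).map b)
  rw [← adj.unit.naturality (a + b)]
  have ha := adj.unit.naturality a
  have hb := adj.unit.naturality b
  simp only [Functor.id_map] at ha hb ⊢
  rw [Preadditive.comp_add, ← ha, ← hb, ← Preadditive.add_comp]
theorem isTrivialExt_of_splitEpi (S : Set 𝕋)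
    (R : (𝕋 ⥤ 𝒜) ⥤ ObjectProperty.FullSubcategory (memF (𝒜 := 𝒜) S))
    (adj : R ⊣ ObjectProperty.ι (memF S))
    {X Y : 𝕋 ⥤ 𝒜} (g : X ⟶ Y) (s : Y ⟶ X) (hs : s ≫ g = 𝟙 Y)
    (hK : memF S (kernel g)) : IsTrivialExt S R adj g := by
  have hcomm : g ≫ adj.unit.app Y = adj.unit.app X ≫ (R ⋙ ObjectProperty.ι (memF S)).map g := by
    simpa using adj.unit.naturality g
  have hk0 : (𝟙 X - g ≫ s) ≫ g = 0 := by
    simp [Preadditive.sub_comp, Category.assoc, hs]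
  set k : X ⟶ kernel g := kernel.lift g (𝟙 X - g ≫ s) hk0 with hkdef
  have hkι : k ≫ kernel.ι g = 𝟙 X - g ≫ s := kernel.lift_ι g _ hk0
  haveI hη : IsIso (adj.unit.app (kernel g)) := unit_isIso S R adj hK
  have hsη : s ≫ adj.unit.app X = adj.unit.app Y ≫ (R ⋙ ObjectProperty.ι (memF S)).map s := by
    simpa using adj.unit.naturality s
  have hιη : kernel.ι g ≫ adj.unit.app X
      = adj.unit.app (kernel g) ≫ (R ⋙ ObjectProperty.ι (memF S)).map (kernel.ι g) := by
    simpa using adj.unit.naturality (kernel.ι g)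
  have hkη : k ≫ adj.unit.app (kernel g) = adj.unit.app X ≫ (R ⋙ ObjectProperty.ι (memF S)).map k := by
    simpa using adj.unit.naturality k
  have hid : (g ≫ s) + k ≫ kernel.ι g = 𝟙 X := by rw [hkι]; abel
  have hURid : (R ⋙ ObjectProperty.ι (memF S)).map (g ≫ s) + (R ⋙ ObjectProperty.ι (memF S)).map (k ≫ kernel.ι g) = 𝟙 _ := by
    rw [← URmap_add S R adj, hid, CategoryTheory.Functor.map_id]
  refine IsPullback.of_isLimit' ⟨hcomm⟩ (PullbackCone.IsLimit.mk _
    (fun c => c.fst ≫ s + c.snd ≫ (R ⋙ ObjectProperty.ι (memF S)).map k ≫ inv (adj.unit.app (kernel g)) ≫ kernel.ι g)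
    ?_ ?_ ?_)
  · intro c
    simp [Preadditive.add_comp, Category.assoc, hs, kernel.condition]
  · intro c
    have hc : c.fst ≫ adj.unit.app Y = c.snd ≫ (R ⋙ ObjectProperty.ι (memF S)).map g := c.condition
    calc (c.fst ≫ s + c.snd ≫ (R ⋙ ObjectProperty.ι (memF S)).map k ≫ inv (adj.unit.app (kernel g)) ≫ kernel.ι g)
          ≫ adj.unit.app X
        = c.fst ≫ s ≫ adj.unit.app X
          + c.snd ≫ (R ⋙ ObjectProperty.ι (memF S)).map k ≫ inv (adj.unit.app (kernel g))
            ≫ kernel.ι g ≫ adj.unit.app X := by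
          simp [Preadditive.add_comp, Category.assoc]
      _ = c.fst ≫ adj.unit.app Y ≫ (R ⋙ ObjectProperty.ι (memF S)).map s
          + c.snd ≫ (R ⋙ ObjectProperty.ι (memF S)).map k ≫ (R ⋙ ObjectProperty.ι (memF S)).map (kernel.ι g) := by
          rw [hsη, hιη]
          simp [Category.assoc]
      _ = c.snd ≫ ((R ⋙ ObjectProperty.ι (memF S)).map (g ≫ s) + (R ⋙ ObjectProperty.ι (memF S)).map (k ≫ kernel.ι g)) := by
          rw [Preadditive.comp_add]
          rw [reassoc_of% hc]
          simp only [Functor.map_comp, Category.assoc]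
          rfl
      _ = c.snd := by rw [hURid, Category.comp_id]
  · intro c m hm1 hm2
    have e1 : (m ≫ k) ≫ adj.unit.app (kernel g)
        = c.snd ≫ (R ⋙ ObjectProperty.ι (memF S)).map k := by
      rw [Category.assoc, hkη, ← Category.assoc, hm2]
    have hmk : m ≫ k = (c.snd ≫ (R ⋙ ObjectProperty.ι (memF S)).map k)
        ≫ inv (adj.unit.app (kernel g)) := (IsIso.eq_comp_inv _).mpr e1
    calc m = m ≫ ((g ≫ s) + k ≫ kernel.ι g) := by rw [hid, Category.comp_id]
      _ = (m ≫ g) ≫ s + (m ≫ k) ≫ kernel.ι g := by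
          simp [Preadditive.comp_add, Category.assoc]
      _ = c.fst ≫ s + c.snd ≫ (R ⋙ ObjectProperty.ι (memF S)).map k ≫ inv (adj.unit.app (kernel g))
            ≫ kernel.ι g := by rw [hm1, hmk]; simp [Category.assoc]
theorem isIso_fst_of_isPullback {C : Type*} [Category C] {P X Y Z : C}
    {fst : P ⟶ X} {snd : P ⟶ Y} {f : X ⟶ Z} {g : Y ⟶ Z}
    (sq : IsPullback fst snd f g) [IsIso g] : IsIso fst := by
  have w := sq.w
  refine ⟨sq.lift (𝟙 X) (f ≫ inv g) (by simp), ?_, sq.lift_fst _ _ _⟩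
  apply sq.hom_ext
  · rw [Category.assoc, sq.lift_fst, Category.comp_id, Category.id_comp]
  · rw [Category.assoc, sq.lift_snd, Category.id_comp, ← Category.assoc, w,
      Category.assoc, IsIso.hom_inv_id, Category.comp_id]

theorem isZero_kernel_obj_of_mono {X Y : 𝕋 ⥤ 𝒜} (g : X ⟶ Y) (T : 𝕋)
    (h : Mono (g.app T)) : IsZero ((kernel g).obj T) := by
  haveI := h
  have h1 : IsZero (kernel (g.app T)) :=
    IsZero.of_mono_eq_zero _ (kernel.ι_of_mono (g.app T))
  exact IsZero.of_iso h1 (PreservesKernel.iso ((evaluation 𝕋 𝒜).obj T) g)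

theorem mono_app_of_isZero {X Y : 𝕋 ⥤ 𝒜} (g : X ⟶ Y) (T : 𝕋)
    (h : IsZero ((kernel g).obj T)) : Mono (g.app T) := by
  have h2 : IsZero (kernel (g.app T)) :=
    IsZero.of_iso h (PreservesKernel.iso ((evaluation 𝕋 𝒜).obj T) g).symm
  apply Preadditive.mono_of_cancel_zero
  intro W w hw
  rw [← kernel.lift_ι (g.app T) w hw, h2.eq_zero_of_tgt (kernel.lift (g.app T) w hw),
    zero_comp]

noncomputable def regularEpi_app {X Y : 𝕋 ⥤ 𝒜} (g : X ⟶ Y) (re : RegularEpi g) (T : 𝕋) :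
    RegularEpi (g.app T) := by
  haveI : HasCoequalizers 𝒜 := Preadditive.hasCoequalizers_of_hasCokernels
  exact
    { W := re.W.obj T
      left := re.left.app T
      right := re.right.app T
      w := by
        have := congr_app re.w T
        simpa using this
      isColimit := isColimitCoforkMapOfIsColimit ((evaluation 𝕋 𝒜).obj T) re.w re.isColimit }

theorem isIso_app_of_isTrivialExt (S : Set 𝕋)
    (R : (𝕋 ⥤ 𝒜) ⥤ ObjectProperty.FullSubcategory (memF (𝒜 := 𝒜) S))
    (adj : R ⊣ ObjectProperty.ι (memF S))
    {X Y : 𝕋 ⥤ 𝒜} {g : X ⟶ Y}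
    (h : IsTrivialExt S R adj g) {T : 𝕋} (hT : T ∉ S) : IsIso (g.app T) := by
  have sq := h.map ((evaluation 𝕋 𝒜).obj T)
  simp only [evaluation_obj_map] at sq
  have h0X : IsZero ((R.obj X).obj.obj T) := (R.obj X).property T hT
  have h0Y : IsZero ((R.obj Y).obj.obj T) := (R.obj Y).property T hT
  haveI : IsIso (((R ⋙ ObjectProperty.ι (memF S)).map g).app T) :=
    ⟨0, h0X.eq_of_src _ _, h0Y.eq_of_src _ _⟩
  exact isIso_fst_of_isPullback sq
/-- Let `𝕋` be a finite category, `𝕊` a replete full subcategory and `𝒜`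
quasi-abelian. For a regular epimorphism `α : F ⟶ G` in `𝒜^𝕋`, the following are
equivalent: (1) `α` is a normal extension (the first kernel pair projection is a trivial
extension); (2) `α` is a central extension (its pullback along some regular epimorphism
`p : E ⟶ G` has trivial first projection); (3) `Ker α` lies in `𝔽`; (4) `α_T` is an
isomorphism for every `T ∉ 𝕊`. -/
theorem central_extension_characterization
    [QuasiAbelian 𝒜]
    (S : Set 𝕋) (hS : ∀ ⦃X Y : 𝕋⦄, (X ≅ Y) → X ∈ S → Y ∈ S)
    (R : (𝕋 ⥤ 𝒜) ⥤ ObjectProperty.FullSubcategory (memF (𝒜 := 𝒜) S))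
    (adj : R ⊣ ObjectProperty.ι (memF S))
    (F G : 𝕋 ⥤ 𝒜) (α : F ⟶ G) (hα : Nonempty (RegularEpi α)) :
    (IsTrivialExt S R adj (pullback.fst α α) ↔
      ∃ (E : 𝕋 ⥤ 𝒜) (p : E ⟶ G), Nonempty (RegularEpi p) ∧
        IsTrivialExt S R adj (pullback.fst p α)) ∧
    ((∃ (E : 𝕋 ⥤ 𝒜) (p : E ⟶ G), Nonempty (RegularEpi p) ∧
        IsTrivialExt S R adj (pullback.fst p α)) ↔
      memF S (kernel α)) ∧
    (memF S (kernel α) ↔ ∀ T : 𝕋, T ∉ S → IsIso (α.app T)) := by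
  obtain ⟨re⟩ := hα
  have h43 : (∀ T : 𝕋, T ∉ S → IsIso (α.app T)) → memF S (kernel α) := by
    intro h4 T hT
    haveI := h4 T hT
    exact isZero_kernel_obj_of_mono α T inferInstance
  have h34 : memF S (kernel α) → ∀ T : 𝕋, T ∉ S → IsIso (α.app T) := by
    intro h3 T hT
    haveI : Mono (α.app T) := mono_app_of_isZero α T (h3 T hT)
    haveI : IsRegularEpi (α.app T) := ⟨⟨regularEpi_app α re T⟩⟩
    exact isIso_of_mono_of_strongEpi _
  have h41 : (∀ T : 𝕋, T ∉ S → IsIso (α.app T)) →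
      IsTrivialExt S R adj (pullback.fst α α) := by
    intro h4
    refine isTrivialExt_of_splitEpi S R adj (pullback.fst α α)
      (pullback.lift (𝟙 F) (𝟙 F) rfl) (pullback.lift_fst _ _ _) ?_
    intro T hT
    have sqP := (IsPullback.of_hasPullback α α).map ((evaluation 𝕋 𝒜).obj T)
    simp only [evaluation_obj_map] at sqP
    haveI := h4 T hT
    haveI : IsIso ((pullback.fst α α).app T) := isIso_fst_of_isPullback sqP
    exact isZero_kernel_obj_of_mono _ T inferInstance
  have h23 : (∃ (E : 𝕋 ⥤ 𝒜) (p : E ⟶ G), Nonempty (RegularEpi p) ∧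
      IsTrivialExt S R adj (pullback.fst p α)) → memF S (kernel α) := by
    rintro ⟨E, p, hp, htriv⟩ T hT
    have sqP := (IsPullback.of_hasPullback p α).map ((evaluation 𝕋 𝒜).obj T)
    simp only [evaluation_obj_map] at sqP
    haveI hfst : IsIso ((pullback.fst p α).app T) :=
      isIso_app_of_isTrivialExt S R adj htriv hT
    apply isZero_kernel_obj_of_mono
    apply Preadditive.mono_of_cancel_zero
    intro W w hw
    have h0 : (0 : W ⟶ E.obj T) ≫ p.app T = w ≫ α.app T := by rw [zero_comp, hw]
    have hl0 : sqP.lift 0 w h0 ≫ (pullback.fst p α).app T = 0 := sqP.lift_fst _ _ _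
    have hl : sqP.lift 0 w h0 = 0 := by
      apply (cancel_mono ((pullback.fst p α).app T)).mp
      rw [hl0, zero_comp]
    rw [← sqP.lift_snd 0 w h0, hl, zero_comp]
  exact ⟨⟨fun h1 => ⟨F, α, ⟨re⟩, h1⟩, fun h2 => h41 (h34 (h23 h2))⟩,
    ⟨h23, fun h3 => ⟨F, α, ⟨re⟩, h41 (h34 h3)⟩⟩,
    ⟨fun h3 => h34 h3, h43⟩⟩

end

end Paper
end

section
/- Let 𝒞 be a pointed finitely complete category in which regular epimorphisms are stable under pullback and in which the Split Short Five Lemma holds (for any morphism of split short exact sequences compatible with the sections, if the induced morphisms on kernels and on codomains are isomorphisms then the middle morphism is an isomorphism). Let 𝔽 be a replete full reflective subcategory of 𝒞 with reflection 𝖥, unit η, and inclusion 𝖴, such that 𝖥 is protoadditive (it preserves split short exact sequences) and the Galois structure is admissible (𝖥 preserves pullbacks of morphisms 𝖴(φ), with φ a regular epimorphism of 𝔽, along unit components η_B). Then for a regular epimorphism f : A → B in 𝒞 the following are equivalent: (1) the kernel pair projection p₁ : A ×_B A → A is a trivial extension, i.e. the naturality square formed by p₁, η_{A×_B A}, η_A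 and 𝖥(p₁) is a pullback (f is a normal extension); (2) there exists a regular epimorphism p : E → B such that the pullback projection p₁ : E ×_B A → E of f along p is a trivial extension (f is a central extension); (3) the kernel Ker(f) lies in 𝔽. -/
open CategoryTheory Limits

universe v u

namespace Paper

set_option linter.unusedSectionVars false

variable {𝒞 : Type u} [Category.{v} 𝒞] [HasZeroObject 𝒞] [HasZeroMorphisms 𝒞]
  [HasFiniteLimits 𝒞]

instance setFullSubcategoryCategory (P : Set 𝒞) :
    Category.{v} (ObjectProperty.FullSubcategory P) :=
  ObjectProperty.FullSubcategory.category (P := P)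

section Aux

variable {P : Set 𝒞} {R : 𝒞 ⥤ ObjectProperty.FullSubcategory P}

lemma unit_precomp_inj (adj : R ⊣ ObjectProperty.ι P) {X : 𝒞}
    {Z : ObjectProperty.FullSubcategory P}
    {a b : (ObjectProperty.ι P).obj (R.obj X) ⟶ (ObjectProperty.ι P).obj Z}
    (h : adj.unit.app X ≫ a = adj.unit.app X ≫ b) : a = b := by
  have : (adj.homEquiv X Z) (ObjectProperty.homMk a) = (adj.homEquiv X Z) (ObjectProperty.homMk b) := by
    rw [adj.homEquiv_unit, adj.homEquiv_unit]
    exact h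
  exact congrArg InducedCategory.Hom.hom ((adj.homEquiv X Z).injective this)

lemma unit_precomp_surj (adj : R ⊣ ObjectProperty.ι P) {X : 𝒞}
    {Z : ObjectProperty.FullSubcategory P} (g : X ⟶ (ObjectProperty.ι P).obj Z) :
    ∃ g' : (ObjectProperty.ι P).obj (R.obj X) ⟶ (ObjectProperty.ι P).obj Z,
      adj.unit.app X ≫ g' = g := by
  refine ⟨(ObjectProperty.ι P).map ((adj.homEquiv X Z).symm g), ?_⟩
  have := adj.homEquiv_unit (X := X) (Y := Z) (f := (adj.homEquiv X Z).symm g)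
  rw [← this, Equiv.apply_symm_apply]

lemma isIso_unit_of_mem (adj : R ⊣ ObjectProperty.ι P) {X : 𝒞} (hX : X ∈ P) :
    IsIso (adj.unit.app X) := by
  have tri : adj.unit.app X ≫ (ObjectProperty.ι P).map (adj.counit.app ⟨X, hX⟩)
      = 𝟙 X := adj.right_triangle_components ⟨X, hX⟩
  refine ⟨(ObjectProperty.ι P).map (adj.counit.app ⟨X, hX⟩), tri, ?_⟩
  apply unit_precomp_inj adj (Z := R.obj X)
  rw [← Category.assoc, tri]
  simp

lemma kernel_mem (hP : ∀ ⦃X Y : 𝒞⦄, (X ≅ Y) → X ∈ P → Y ∈ P)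
    (adj : R ⊣ ObjectProperty.ι P) {Z₁ Z₂ : ObjectProperty.FullSubcategory P}
    (g : (ObjectProperty.ι P).obj Z₁ ⟶ (ObjectProperty.ι P).obj Z₂) :
    kernel g ∈ P := by
  obtain ⟨ι', hι'⟩ := unit_precomp_surj adj (kernel.ι g)
  have hcomp : ι' ≫ g = 0 := by
    apply unit_precomp_inj adj
    rw [← Category.assoc, hι', kernel.condition, comp_zero]
  let ρ : (ObjectProperty.ι P).obj (R.obj (kernel g)) ⟶ kernel g :=
    kernel.lift g ι' hcomp
  have h1 : adj.unit.app (kernel g) ≫ ρ = 𝟙 (kernel g) := by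
    rw [← cancel_mono (kernel.ι g)]
    simp [ρ, hι']
  have h2 : ρ ≫ adj.unit.app (kernel g) = 𝟙 _ := by
    apply unit_precomp_inj adj (Z := R.obj (kernel g))
    rw [← Category.assoc, h1]
    simp
  have : IsIso (adj.unit.app (kernel g)) := ⟨ρ, h1, h2⟩
  exact hP (asIso (adj.unit.app (kernel g))).symm (R.obj (kernel g)).property

lemma kernel_of_pullback {Q X Y Z K : 𝒞} {q₁ : Q ⟶ X} {q₂ : Q ⟶ Y} {g : X ⟶ Z} {h : Y ⟶ Z}
    (hpb : IsPullback q₁ q₂ g h) {k : K ⟶ Y} {wk : k ≫ h = 0}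
    (hk : IsLimit (KernelFork.ofι k wk)) :
    ∃ (m : K ⟶ Q) (hm1 : m ≫ q₁ = 0) (_ : m ≫ q₂ = k),
      Nonempty (IsLimit (KernelFork.ofι m hm1)) := by
  have hmk : Mono k := by
    have := mono_of_isLimit_fork hk
    simpa using this
  have hzg : (0 : K ⟶ X) ≫ g = k ≫ h := by rw [zero_comp, wk]
  have key : ∀ {T : 𝒞} (x : T ⟶ Q), x ≫ q₁ = 0 → (x ≫ q₂) ≫ h = 0 := by
    intro T x hx
    rw [Category.assoc, ← hpb.w, ← Category.assoc, hx, zero_comp]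
  refine ⟨hpb.lift 0 k hzg, by simp, by simp, ⟨?_⟩⟩
  refine KernelFork.IsLimit.ofι _ _
    (fun {T} x hx => (KernelFork.IsLimit.lift' hk (x ≫ q₂) (key x hx)).1) ?_ ?_
  · intro T x hx
    have h2 := (KernelFork.IsLimit.lift' hk (x ≫ q₂) (key x hx)).2
    simp only [KernelFork.ι_ofι] at h2
    apply hpb.hom_ext
    · rw [Category.assoc, IsPullback.lift_fst, comp_zero, hx]
    · rw [Category.assoc, IsPullback.lift_snd]
      exact h2
  · intro T x hx m hm
    have h2 := (KernelFork.IsLimit.lift' hk (x ≫ q₂) (key x hx)).2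
    simp only [KernelFork.ι_ofι] at h2
    rw [← cancel_mono k]
    beta_reduce
    rw [h2, ← hm, Category.assoc, IsPullback.lift_snd]

def kernel_restrict {K A A' B : 𝒞} {k : K ⟶ A} {f : A ⟶ B} {wk : k ≫ f = 0}
    (hk : IsLimit (KernelFork.ofι k wk)) {e : A' ⟶ A} (he : Mono e) {k' : K ⟶ A'}
    (hke : k' ≫ e = k) (w' : k' ≫ (e ≫ f) = 0) :
    IsLimit (KernelFork.ofι k' w') := by
  have hmk : Mono k := by
    have := mono_of_isLimit_fork hk
    simpa using this
  have key : ∀ {T : 𝒞} (x : T ⟶ A'), x ≫ (e ≫ f) = 0 → (x ≫ e) ≫ f = 0 := by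
    intro T x hx
    rw [Category.assoc]; exact hx
  refine KernelFork.IsLimit.ofι _ _
    (fun {T} x hx => (KernelFork.IsLimit.lift' hk (x ≫ e) (key x hx)).1) ?_ ?_
  · intro T x hx
    have h2 := (KernelFork.IsLimit.lift' hk (x ≫ e) (key x hx)).2
    simp only [KernelFork.ι_ofι] at h2
    beta_reduce
    rw [← cancel_mono e, Category.assoc, hke, h2]
  · intro T x hx m hm
    have h2 := (KernelFork.IsLimit.lift' hk (x ≫ e) (key x hx)).2
    simp only [KernelFork.ι_ofι] at h2
    rw [← cancel_mono k]
    beta_reduce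
    rw [h2, ← hke, ← Category.assoc, hm]

end Aux

section Main

lemma isColimit_cokernelCofork_of_splitEpi {𝒞 : Type u} [Category.{v} 𝒞] [HasZeroObject 𝒞]
    [HasZeroMorphisms 𝒞] [HasFiniteLimits 𝒞]
    (h5 : ∀ {K A B K' A' B' : 𝒞} (k : K ⟶ A) (f : A ⟶ B) (s : B ⟶ A)
      (k' : K' ⟶ A') (f' : A' ⟶ B') (s' : B' ⟶ A')
      (u : K ⟶ K') (v : A ⟶ A') (w : B ⟶ B'),
      s ≫ f = 𝟙 B → s' ≫ f' = 𝟙 B' →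
      ∀ (wk : k ≫ f = 0) (wk' : k' ≫ f' = 0),
      IsLimit (KernelFork.ofι k wk) → IsLimit (KernelFork.ofι k' wk') →
      k ≫ v = u ≫ k' → f ≫ w = v ≫ f' → s ≫ v = w ≫ s' →
      IsIso u → IsIso w → IsIso v)
    {K A B : 𝒞} (k : K ⟶ A) (f : A ⟶ B) (s : B ⟶ A)
    (hs : s ≫ f = 𝟙 B) (wk : k ≫ f = 0) (hk : IsLimit (KernelFork.ofι k wk)) :
    Nonempty (IsColimit (CokernelCofork.ofπ f wk)) := by
  have key : ∀ {T : 𝒞} (q : A ⟶ T), k ≫ q = 0 → f ≫ s ≫ q = q := by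
    intro T q hq
    have hek : k ≫ (f ≫ s ≫ q) = k ≫ q := by
      rw [← Category.assoc, wk, zero_comp, hq]
    have hes : s ≫ (f ≫ s ≫ q) = s ≫ q := by
      rw [← Category.assoc, hs, Category.id_comp]
    have hk₀e : equalizer.lift k hek ≫ equalizer.ι (f ≫ s ≫ q) q = k := equalizer.lift_ι _ _
    have hs₀e : equalizer.lift s hes ≫ equalizer.ι (f ≫ s ≫ q) q = s := equalizer.lift_ι _ _
    have wk' : equalizer.lift k hek ≫ (equalizer.ι (f ≫ s ≫ q) q ≫ f) = 0 := by
      rw [← Category.assoc, hk₀e, wk]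
    have hk' : IsLimit (KernelFork.ofι (equalizer.lift k hek) wk') :=
      kernel_restrict hk inferInstance hk₀e wk'
    have hs' : equalizer.lift s hes ≫ (equalizer.ι (f ≫ s ≫ q) q ≫ f) = 𝟙 B := by
      rw [← Category.assoc, hs₀e, hs]
    have hiso : IsIso (equalizer.ι (f ≫ s ≫ q) q) := by
      refine h5 (equalizer.lift k hek) (equalizer.ι (f ≫ s ≫ q) q ≫ f) (equalizer.lift s hes)
        k f s (𝟙 K) (equalizer.ι (f ≫ s ≫ q) q) (𝟙 B) hs' hs wk' wk hk' hk ?_ ?_ ?_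
        inferInstance inferInstance
      · rw [hk₀e, Category.id_comp]
      · rw [Category.comp_id]
      · rw [hs₀e, Category.id_comp]
    have hcond := equalizer.condition (f ≫ s ≫ q) q
    haveI := hiso
    exact (cancel_epi (equalizer.ι (f ≫ s ≫ q) q)).1 hcond
  refine ⟨CokernelCofork.IsColimit.ofπ f wk (fun {T} q hq => s ≫ q)
    (fun {T} q hq => key q hq) ?_⟩
  intro T q hq m hm
  beta_reduce
  rw [← hm, ← Category.assoc, hs, Category.id_comp]

end Main


/-- Let `𝒞` be a pointed finitely complete category with pullback-stable
regular epimorphisms satisfying the Split Short Five Lemma, and let `𝔽` (given by the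
predicate `P`) be a replete full reflective subcategory with reflection `R` whose reflector
is protoadditive and for which the Galois structure is admissible. Then for a regular
epimorphism `f : A ⟶ B` the conditions "normal extension", "central extension" and
"`Ker f ∈ 𝔽`" are equivalent. -/
theorem normal_iff_central_iff_kernel_in_F
    -- regular epimorphisms are stable under pullback
    (hpb : ∀ {Q X Y Z : 𝒞} (fst : Q ⟶ X) (snd : Q ⟶ Y) (g : X ⟶ Z) (f : Y ⟶ Z),
      IsPullback fst snd g f → Nonempty (RegularEpi f) → Nonempty (RegularEpi fst))
    -- the Split Short Five Lemma holds in 𝒞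
    (h5 : ∀ {K A B K' A' B' : 𝒞} (k : K ⟶ A) (f : A ⟶ B) (s : B ⟶ A)
      (k' : K' ⟶ A') (f' : A' ⟶ B') (s' : B' ⟶ A')
      (u : K ⟶ K') (v : A ⟶ A') (w : B ⟶ B'),
      s ≫ f = 𝟙 B → s' ≫ f' = 𝟙 B' →
      ∀ (wk : k ≫ f = 0) (wk' : k' ≫ f' = 0),
      IsLimit (KernelFork.ofι k wk) → IsLimit (KernelFork.ofι k' wk') →
      k ≫ v = u ≫ k' → f ≫ w = v ≫ f' → s ≫ v = w ≫ s' →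
      IsIso u → IsIso w → IsIso v)
    -- the replete full reflective subcategory 𝔽, given by a predicate on objects
    (P : Set 𝒞) (hP : ∀ ⦃X Y : 𝒞⦄, (X ≅ Y) → X ∈ P → Y ∈ P)
    (R : 𝒞 ⥤ ObjectProperty.FullSubcategory P) (adj : R ⊣ ObjectProperty.ι P)
    -- the reflector is protoadditive: it preserves split short exact sequences
    (hproto : ∀ {K A B : 𝒞} (k : K ⟶ A) (f : A ⟶ B) (s : B ⟶ A), s ≫ f = 𝟙 B →
      ∀ (wk : k ≫ f = 0), IsLimit (KernelFork.ofι k wk) →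
        IsColimit (CokernelCofork.ofπ f wk) →
        ∃ w' : (R ⋙ ObjectProperty.ι P).map k ≫
            (R ⋙ ObjectProperty.ι P).map f = 0,
          Nonempty (IsLimit (KernelFork.ofι ((R ⋙ ObjectProperty.ι P).map k) w')) ∧
          Nonempty (IsColimit
            (CokernelCofork.ofπ ((R ⋙ ObjectProperty.ι P).map f) w')))
    -- admissibility: R preserves pullbacks of inclusions of regular epimorphisms of 𝔽
    -- along unit components
    (hadm : ∀ (B : 𝒞) (X : ObjectProperty.FullSubcategory P) (φ : X ⟶ R.obj B),
      Nonempty (RegularEpi φ) →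
      ∀ {Q : 𝒞} (q₁ : Q ⟶ B) (q₂ : Q ⟶ (ObjectProperty.ι P).obj X),
        IsPullback q₁ q₂ (adj.unit.app B) ((ObjectProperty.ι P).map φ) →
        IsPullback (R.map q₁) (R.map q₂) (R.map (adj.unit.app B))
          (R.map ((ObjectProperty.ι P).map φ)))
    -- a regular epimorphism f : A ⟶ B
    {A B : 𝒞} (f : A ⟶ B) (hf : Nonempty (RegularEpi f)) :
    -- (1) f is a normal extension
    (IsPullback (pullback.fst f f) (adj.unit.app (pullback f f)) (adj.unit.app A)
        ((R ⋙ ObjectProperty.ι P).map (pullback.fst f f)) ↔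
      -- (2) f is a central extension
      ∃ (E : 𝒞) (p : E ⟶ B), Nonempty (RegularEpi p) ∧
        IsPullback (pullback.fst p f) (adj.unit.app (pullback p f)) (adj.unit.app E)
          ((R ⋙ ObjectProperty.ι P).map (pullback.fst p f))) ∧
    ((∃ (E : 𝒞) (p : E ⟶ B), Nonempty (RegularEpi p) ∧
        IsPullback (pullback.fst p f) (adj.unit.app (pullback p f)) (adj.unit.app E)
          ((R ⋙ ObjectProperty.ι P).map (pullback.fst p f))) ↔
      -- (3) the kernel of f lies in 𝔽
      kernel f ∈ P) := by
  have h31 : kernel f ∈ P →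
      IsPullback (pullback.fst f f) (adj.unit.app (pullback f f)) (adj.unit.app A)
        ((R ⋙ ObjectProperty.ι P).map (pullback.fst f f)) := by
    intro hK
    obtain ⟨m, hm1, hm2, ⟨hmlim⟩⟩ :=
      kernel_of_pullback (IsPullback.of_hasPullback f f) (wk := kernel.condition f)
        (kernelIsKernel f)
    set fst := pullback.fst f f with hfstdef
    let Δ : A ⟶ pullback f f := pullback.lift (𝟙 A) (𝟙 A) rfl
    have hΔ : Δ ≫ fst = 𝟙 A := pullback.lift_fst _ _ _
    obtain ⟨hcoker⟩ := isColimit_cokernelCofork_of_splitEpi h5 m fst Δ hΔ hm1 hmlim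
    obtain ⟨w', ⟨hGlim⟩, -⟩ := hproto m fst Δ hΔ hm1 hmlim hcoker
    set Gfst := (R ⋙ ObjectProperty.ι P).map fst with hGfstdef
    have hnat : fst ≫ adj.unit.app A = adj.unit.app (pullback f f) ≫ Gfst :=
      adj.unit.naturality fst
    obtain ⟨κ, hκ1, hκ2, ⟨hκlim⟩⟩ :=
      kernel_of_pullback (IsPullback.of_hasPullback (adj.unit.app A) Gfst)
        (wk := kernel.condition Gfst) (kernelIsKernel Gfst)
    let c : pullback f f ⟶ pullback (adj.unit.app A) Gfst :=
      pullback.lift fst (adj.unit.app (pullback f f)) hnat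
    have hc1 : c ≫ pullback.fst (adj.unit.app A) Gfst = fst := pullback.lift_fst _ _ _
    have hc2 : c ≫ pullback.snd (adj.unit.app A) Gfst = adj.unit.app (pullback f f) :=
      pullback.lift_snd _ _ _
    have htw : (𝟙 A) ≫ adj.unit.app A =
        (adj.unit.app A ≫ (R ⋙ ObjectProperty.ι P).map Δ) ≫ Gfst := by
      rw [Category.id_comp, Category.assoc, hGfstdef, ← Functor.map_comp, hΔ,
        CategoryTheory.Functor.map_id, Category.comp_id]
    let t : A ⟶ pullback (adj.unit.app A) Gfst :=
      pullback.lift (𝟙 A) (adj.unit.app A ≫ (R ⋙ ObjectProperty.ι P).map Δ) htw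
    have ht1 : t ≫ pullback.fst (adj.unit.app A) Gfst = 𝟙 A := pullback.lift_fst _ _ _
    have ht2 : t ≫ pullback.snd (adj.unit.app A) Gfst =
        adj.unit.app A ≫ (R ⋙ ObjectProperty.ι P).map Δ := pullback.lift_snd _ _ _
    let j := hGlim.conePointUniqueUpToIso (kernelIsKernel Gfst)
    have hj : j.hom ≫ kernel.ι Gfst = (R ⋙ ObjectProperty.ι P).map m := by
      have := hGlim.conePointUniqueUpToIso_hom_comp (kernelIsKernel Gfst)
        WalkingParallelPair.zero
      simpa using this
    haveI hη : IsIso (adj.unit.app (kernel f)) := isIso_unit_of_mem adj hK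
    let u : kernel f ⟶ kernel Gfst := adj.unit.app (kernel f) ≫ j.hom
    haveI hu : IsIso u := by
      have : IsIso j.hom := inferInstance
      exact IsIso.comp_isIso
    have hnatm : m ≫ adj.unit.app (pullback f f) =
        adj.unit.app (kernel f) ≫ (R ⋙ ObjectProperty.ι P).map m := by
      simpa using adj.unit.naturality m
    have sq1 : m ≫ c = u ≫ κ := by
      apply pullback.hom_ext
      · simp only [Category.assoc]
        rw [hc1, hm1, hκ1, comp_zero]
      · simp only [Category.assoc]
        rw [hc2, hκ2, hnatm]
        simp only [u, Category.assoc, hj]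
    have sq2 : fst ≫ 𝟙 A = c ≫ pullback.fst (adj.unit.app A) Gfst := by
      rw [Category.comp_id, hc1]
    have sq3 : Δ ≫ c = 𝟙 A ≫ t := by
      apply pullback.hom_ext
      · simp only [Category.assoc]
        rw [hc1, hΔ, Category.id_comp, ht1]
      · simp only [Category.assoc]
        rw [hc2, Category.id_comp, ht2]
        simpa using adj.unit.naturality Δ
    haveI hciso : IsIso c :=
      h5 m fst Δ κ (pullback.fst (adj.unit.app A) Gfst) t u c (𝟙 A) hΔ ht1 hm1 hκ1
        hmlim hκlim sq1 sq2 sq3 hu inferInstance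
    exact IsPullback.of_iso_pullback ⟨hnat⟩ (asIso c) hc1 hc2
  have h23 : (∃ (E : 𝒞) (p : E ⟶ B), Nonempty (RegularEpi p) ∧
      IsPullback (pullback.fst p f) (adj.unit.app (pullback p f)) (adj.unit.app E)
        ((R ⋙ ObjectProperty.ι P).map (pullback.fst p f))) → kernel f ∈ P := by
    rintro ⟨E, p, hp, hsq⟩
    obtain ⟨m, hm1, hm2, ⟨hmlim⟩⟩ :=
      kernel_of_pullback (IsPullback.of_hasPullback p f) (wk := kernel.condition f)
        (kernelIsKernel f)
    obtain ⟨m', hm1', hm2', ⟨hmlim'⟩⟩ :=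
      kernel_of_pullback hsq
        (wk := kernel.condition ((R ⋙ ObjectProperty.ι P).map (pullback.fst p f)))
        (kernelIsKernel ((R ⋙ ObjectProperty.ι P).map (pullback.fst p f)))
    have hmem : kernel ((R ⋙ ObjectProperty.ι P).map (pullback.fst p f)) ∈ P :=
      kernel_mem hP adj ((ObjectProperty.ι P).map (R.map (pullback.fst p f)))
    exact hP (hmlim'.conePointUniqueUpToIso hmlim) hmem
  have h12 : IsPullback (pullback.fst f f) (adj.unit.app (pullback f f)) (adj.unit.app A)
      ((R ⋙ ObjectProperty.ι P).map (pullback.fst f f)) →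
      ∃ (E : 𝒞) (p : E ⟶ B), Nonempty (RegularEpi p) ∧
        IsPullback (pullback.fst p f) (adj.unit.app (pullback p f)) (adj.unit.app E)
          ((R ⋙ ObjectProperty.ι P).map (pullback.fst p f)) :=
    fun h1 => ⟨A, f, hf, h1⟩
  exact ⟨⟨h12, fun h2 => h31 (h23 h2)⟩, ⟨h23, fun h3 => h12 (h31 h3)⟩⟩

end Paper
end

section
/- Let 𝕋 be a finite category, 𝕊 a replete full subcategory of 𝕋, and 𝒜 a quasi-abelian category. Then the torsion subcategory 𝒯 of 𝒜^𝕋 is closed under protosplit subobjects: if m : F → G is a morphism in 𝒜^𝕋 that is a kernel of some split epimorphism, and G lies in 𝒯, then F lies in 𝒯. -/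
open CategoryTheory Limits ZeroObject

universe w v u

namespace Paper

variable {𝕋 : Type v} [SmallCategory 𝕋] [FinCategory 𝕋]
variable {𝒜 : Type u} [Category.{w} 𝒜]

/-- Let `𝕋` be a finite category, `𝕊` a replete full subcategory and `𝒜`
quasi-abelian. The torsion subcategory `𝒯` of `𝒜^𝕋` is closed under protosplit subobjects:
if `m : F ⟶ G` is a kernel of a split epimorphism `g : G ⟶ H` and `G` lies in `𝒯`,
then `F` lies in `𝒯`. -/
theorem torsion_closed_under_protosplit_subobjects
    [Preadditive 𝒜] [HasFiniteBiproducts 𝒜] [HasKernels 𝒜] [HasCokernels 𝒜]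
    [QuasiAbelian 𝒜]
    (S : Set 𝕋) (hS : ∀ ⦃X Y : 𝕋⦄, (X ≅ Y) → X ∈ S → Y ∈ S)
    (F G H : 𝕋 ⥤ 𝒜) (m : F ⟶ G) (g : G ⟶ H) (s : H ⟶ G) (hs : s ≫ g = 𝟙 H)
    (w : m ≫ g = 0) (hm : IsLimit (KernelFork.ofι m w))
    (hG : memT S G) :
    memT S F := by
  -- `m` is a mono since it is a kernel
  have hmono : Mono m := mono_of_isLimit_fork hm
  -- `𝟙 G - g ≫ s` kills `g`, so it factors through the kernel `m`
  have hzero : (𝟙 G - g ≫ s) ≫ g = 0 := by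
    simp only [Preadditive.sub_comp, Category.id_comp, Category.assoc, hs,
      Category.comp_id, sub_self]
  obtain ⟨q, hq⟩ := KernelFork.IsLimit.lift' hm (𝟙 G - g ≫ s) hzero
  have hq' : q ≫ m = 𝟙 G - g ≫ s := hq
  -- `q` is a retraction of `m`
  have hret : m ≫ q = 𝟙 F := by
    rw [← cancel_mono m, Category.assoc, hq', Category.id_comp, Preadditive.comp_sub,
      Category.comp_id, ← Category.assoc, w, zero_comp, sub_zero]
  intro T
  -- naturality of `canon` with respect to `q`
  have hcomm : Limits.Sigma.map (fun p : Idx S T => q.app p.1.1) ≫ canon S F T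
      = canon S G T ≫ q.app T := by
    ext p
    simp [canon, q.naturality]
  haveI h1 : Epi (q.app T) := by
    have hfac : m.app T ≫ q.app T = 𝟙 (F.obj T) := by
      rw [← NatTrans.comp_app, hret]; rfl
    exact epi_of_epi_fac hfac
  haveI h2 : Epi (canon S G T) := hG T
  have h3 : Epi (canon S G T ≫ q.app T) := epi_comp _ _
  rw [← hcomm] at h3
  haveI := h3
  exact epi_of_epi (Limits.Sigma.map fun p : Idx S T => q.app p.1.1) (canon S F T)

end Paper
end

section
/- Let 𝕋 be the 'walking arrow' category with exactly two objects 1 and 0 and a unique nonidentity morphism 1 → 0, let 𝕊 be the full subcategory on the object 0, and let 𝒜 = Ab be the category of abelian groups, so that 𝒜^𝕋 is the arrow category of Ab. Let F be the object id_ℤ : ℤ → ℤ, let G be the object ℤ → 0, and let α : F → G be the morphism with components α_1 = id_ℤ and α_0 = 0 : ℤ → 0. Then α is a regular epimorphism in 𝒜^𝕋 whose kernel lies in 𝔽 (so α is a central extension with respect to 𝔽), but the naturality square formed by α, the unit components η_F : F → 𝖥(F) and η_G : G → 𝖥(G), and 𝖥(α) is not a pullback square (so α is not a trivial extension). -/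
open CategoryTheory Limits ZeroObject

namespace Paper13

/-- Membership in the full subcategory `𝔽` of `Ab^𝕋` for `𝕋 = Fin 2` (the walking arrow
`0 ⟶ 1`, where the object `0` plays the role of the paper's object `1 ∉ 𝕊` and the object
`1` plays the role of the paper's object `0 ∈ 𝕊`). -/
def memF (S : Set (Fin 2)) (F : Fin 2 ⥤ AddCommGrpCat) : Prop :=
  ∀ T : Fin 2, T ∉ S → IsZero (F.obj T)

/-- The object `id_ℤ : ℤ ⟶ ℤ` of the arrow category `Ab^𝕋`. -/
noncomputable def Fobj : Fin 2 ⥤ AddCommGrpCat :=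
  ComposableArrows.mk₁ (𝟙 (AddCommGrpCat.of ℤ))

/-- The object `ℤ ⟶ 0` of the arrow category `Ab^𝕋`. -/
noncomputable def Gobj : Fin 2 ⥤ AddCommGrpCat :=
  ComposableArrows.mk₁ (0 : AddCommGrpCat.of ℤ ⟶ 0)

/-- The morphism `α : Fobj ⟶ Gobj` with components `id_ℤ` and `0`. -/
noncomputable def α : Fobj ⟶ Gobj :=
  ComposableArrows.homMk₁ (𝟙 (AddCommGrpCat.of ℤ)) 0
    ((isZero_zero AddCommGrpCat).eq_of_tgt _ _)

/-- The morphism `α : (id_ℤ : ℤ ⟶ ℤ) ⟶ (ℤ ⟶ 0)` of the arrow category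
of abelian groups is a regular epimorphism whose kernel lies in `𝔽` (so `α` is a central
extension with respect to `𝔽`), but for any reflection `(R, adj)` of `𝒜^𝕋` onto `𝔽`
the naturality square of `α` with the unit is not a pullback (so `α` is not a trivial
extension). -/
theorem central_but_not_trivial :
    Nonempty (RegularEpi α) ∧
    memF {1} (kernel α) ∧
    ∀ (R : (Fin 2 ⥤ AddCommGrpCat) ⥤ ObjectProperty.FullSubcategory (memF {1}))
      (adj : R ⊣ ObjectProperty.ι (memF {1})),
      ¬ IsPullback α (adj.unit.app Fobj) (adj.unit.app Gobj)
          ((R ⋙ ObjectProperty.ι (memF {1})).map α) := by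
  refine ⟨?_, ?_, ?_⟩
  · -- `α` is a regular epimorphism
    haveI : ∀ X, Epi (α.app X) := by
      intro X
      fin_cases X
      · exact (inferInstance : Epi (𝟙 (AddCommGrpCat.of ℤ)))
      · exact ⟨fun g h _ => (isZero_zero AddCommGrpCat).eq_of_src g h⟩
    haveI : Epi α := NatTrans.epi_of_epi_app α
    exact ⟨regularEpiOfEpi α⟩
  · -- the kernel of `α` lies in `𝔽`
    intro T hT
    fin_cases T
    · haveI : Mono (((evaluation (Fin 2) AddCommGrpCat).obj 0).map α) :=
        (inferInstance : Mono (𝟙 (AddCommGrpCat.of ℤ)))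
      exact (isZero_zero _).of_iso
        ((PreservesKernel.iso ((evaluation (Fin 2) AddCommGrpCat).obj 0) α) ≪≫
          kernel.ofMono _)
    · simp at hT
  · -- the unit square of `α` is not a pullback
    intro R adj h
    have hRG0 : IsZero (((ObjectProperty.ι (memF {1})).obj (R.obj Gobj)).obj 0) :=
      (R.obj Gobj).property 0 (by simp)
    have hηG : adj.unit.app Gobj = 0 := by
      apply ComposableArrows.hom_ext₁
      · exact hRG0.eq_of_tgt _ _
      · exact (isZero_zero AddCommGrpCat).eq_of_src _ _
    have w : 𝟙 Gobj ≫ adj.unit.app Gobj =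
        (0 : Gobj ⟶ (ObjectProperty.ι (memF {1})).obj (R.obj Fobj)) ≫
          (R ⋙ ObjectProperty.ι (memF {1})).map α := by
      rw [hηG]; simp
    have h1 : h.lift (𝟙 Gobj) 0 w ≫ α = 𝟙 Gobj := h.lift_fst _ _ _
    set l := h.lift (𝟙 Gobj) 0 w with hl
    have hnat := l.naturality (homOfLE (by decide) : (0 : Fin 2) ⟶ 1)
    have hG0 : Gobj.map (homOfLE (by decide) : (0 : Fin 2) ⟶ 1) = 0 :=
      (isZero_zero AddCommGrpCat).eq_of_tgt _ _
    have hl0 : l.app 0 = 0 := by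
      have : l.app 0 ≫ Fobj.map (homOfLE (by decide) : (0 : Fin 2) ⟶ 1) = 0 := by
        rw [← hnat, hG0, zero_comp]
      have e : l.app 0 ≫ 𝟙 (Fobj.obj 0) = 0 := this
      simpa using e
    have h10 : l.app 0 ≫ α.app 0 = 𝟙 (AddCommGrpCat.of ℤ) := by
      have := congrArg (fun (φ : Gobj ⟶ Gobj) => φ.app 0) h1
      simp at this
      exact this
    rw [hl0, zero_comp] at h10
    have : (1 : ℤ) = 0 := ConcreteCategory.congr_hom h10.symm (1 : ℤ)
    exact one_ne_zero this

end Paper13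
end
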